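/- arXiv:2007.10108 — 5 statements merged into one kernel-verified Lean document; each statement's English description precedes it below -/
import Mathlib

section
/- For any potential V in the class 𝒞, any integer N ≥ 2 and any j ∈ {1,…,N−1}, the linear function f_N^{(j)}(x) = Σ_{k=1}^{N-1} sin(jπk/N)·x_k satisfies ℒ f_N^{(j)}(x) = −(1 − cos(jπ/N))·f_N^{(j)}(x) for every x ∈ Ω_N; in particular every linear function of the coordinates is mapped by ℒ to a linear function, and Q_k applied to the coordinate map g_k(x) = x_k gives Q_k g_k(x) = (x_{k-1}+x_{k+1})/2. -/
open MeasureTheory Filter Real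

noncomputable section

/-- The class 𝒞 of potentials: convex, at most polynomial growth, non-affine
(the asymptotic slopes at `+∞` and `-∞`, taken in the extended reals, differ). -/
structure InClassC (V : ℝ → ℝ) : Prop where
  convex : ConvexOn ℝ Set.univ V
  growth : ∃ C > (0 : ℝ), ∃ K : ℝ, 1 ≤ K ∧ ∀ x : ℝ, |V x| ≤ C * (1 + |x|) ^ K
  slopes : ∃ vm vp : EReal,
    Tendsto (fun x : ℝ => ((V x / x : ℝ) : EReal)) atBot (nhds vm) ∧
    Tendsto (fun x : ℝ => ((V x / x : ℝ) : EReal)) atTop (nhds vp) ∧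
    vm < vp

/-- Configuration in `Ω_N` built from the `N-1` inner coordinates: coordinates
`1,…,N-1` are free, all others (in particular `0` and `N`) vanish. -/
def conf (N : ℕ) (y : Fin (N - 1) → ℝ) : ℕ → ℝ := fun k =>
  if h : 1 ≤ k ∧ k ≤ N - 1 then y ⟨k - 1, by omega⟩ else 0

/-- The Hamiltonian `H(x) = Σ_{k=1}^N V(x_k - x_{k-1})`. -/
def Ham (V : ℝ → ℝ) (N : ℕ) (x : ℕ → ℝ) : ℝ :=
  ∑ k ∈ Finset.range N, V (x (k + 1) - x k)

/-- Normalisation constant `Z_N`. -/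
def Zpart (V : ℝ → ℝ) (N : ℕ) : ℝ :=
  ∫ y : Fin (N - 1) → ℝ, Real.exp (-(Ham V N (conf N y)))

/-- The Gibbs measure `π_N` on `Ω_N`, viewed as a measure on configurations `ℕ → ℝ`:
the inner coordinates have density `e^{-H}/Z_N` w.r.t. Lebesgue measure. -/
def piN (V : ℝ → ℝ) (N : ℕ) : Measure (ℕ → ℝ) :=
  Measure.map (conf N)
    (volume.withDensity fun y : Fin (N - 1) → ℝ =>
      ENNReal.ofReal (Real.exp (-(Ham V N (conf N y))) / Zpart V N))

/-- The resampling density `ρ_{b,c}`. -/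
def rho (V : ℝ → ℝ) (b c u : ℝ) : ℝ :=
  Real.exp (-(V (u - b) + V (c - u))) / ∫ s : ℝ, Real.exp (-(V (s - b) + V (c - s)))

/-- The heat-bath update operator `Q_k` acting on functions. -/
def Qop (V : ℝ → ℝ) (k : ℕ) (f : (ℕ → ℝ) → ℝ) (x : ℕ → ℝ) : ℝ :=
  ∫ u : ℝ, f (Function.update x k u) * rho V (x (k - 1)) (x (k + 1)) u

/-- The heat-bath generator `ℒ f = Σ_{k=1}^{N-1} (Q_k f - f)`. -/
def gen (V : ℝ → ℝ) (N : ℕ) (f : (ℕ → ℝ) → ℝ) (x : ℕ → ℝ) : ℝ :=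
  ∑ k ∈ Finset.Icc 1 (N - 1), (Qop V k f x - f x)

/-- The spectral gap of `ℒ` in `L²(π_N)`. -/
def spectralGap (V : ℝ → ℝ) (N : ℕ) : ℝ :=
  sInf { r : ℝ | ∃ f : (ℕ → ℝ) → ℝ, MemLp f 2 (piN V N) ∧
    (∫ x, f x ∂piN V N) = 0 ∧ (∫ x, (f x) ^ 2 ∂piN V N) ≠ 0 ∧
    r = (∫ x, f x * (-(gen V N f x)) ∂piN V N) / ∫ x, (f x) ^ 2 ∂piN V N }

/-- The Markov kernel resampling coordinate `k`, as a measure-valued map. -/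
def Qstep (V : ℝ → ℝ) (k : ℕ) (x : ℕ → ℝ) : Measure (ℕ → ℝ) :=
  Measure.map (fun u => Function.update x k u)
    (volume.withDensity fun u : ℝ => ENNReal.ofReal (rho V (x (k - 1)) (x (k + 1)) u))

/-- The averaged kernel `Q̄ = (N-1)⁻¹ Σ_{k=1}^{N-1} Q_k`. -/
def QbarStep (V : ℝ → ℝ) (N : ℕ) (x : ℕ → ℝ) : Measure (ℕ → ℝ) :=
  ENNReal.ofReal ((N - 1 : ℝ)⁻¹) • ∑ k ∈ Finset.Icc 1 (N - 1), Qstep V k x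

/-- Iterates `Q̄^n(x, ·)`. -/
def QbarIter (V : ℝ → ℝ) (N : ℕ) : ℕ → (ℕ → ℝ) → Measure (ℕ → ℝ)
  | 0 => fun x => Measure.dirac x
  | n + 1 => fun x => (QbarStep V N x).bind (QbarIter V N n)

/-- The law `P_t^x` of the heat-bath process at time `t` started at `x`. -/
def Pt (V : ℝ → ℝ) (N : ℕ) (t : ℝ) (x : ℕ → ℝ) : Measure (ℕ → ℝ) :=
  Measure.sum fun n : ℕ =>
    ENNReal.ofReal (Real.exp (-((N : ℝ) - 1) * t) * (((N : ℝ) - 1) * t) ^ n / n.factorial) •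
      QbarIter V N n x

/-- Total variation distance `sup_B (μ(B) - ν(B))`. -/
def tvDist {α : Type*} [MeasurableSpace α] (μ ν : Measure α) : ℝ :=
  sSup { r : ℝ | ∃ B : Set α, MeasurableSet B ∧ r = (μ B).toReal - (ν B).toReal }

/-- Worst-case distance to equilibrium from initial conditions of height at most `N`. -/
def dN (V : ℝ → ℝ) (N : ℕ) (t : ℝ) : ℝ :=
  sSup { r : ℝ | ∃ x : ℕ → ℝ, x 0 = 0 ∧ x N = 0 ∧ (∀ k ≤ N, |x k| ≤ (N : ℝ)) ∧
    r = tvDist (Pt V N t x) (piN V N) }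

/-- The `ε`-mixing time. -/
def TN (V : ℝ → ℝ) (N : ℕ) (ε : ℝ) : ℝ :=
  sInf { t : ℝ | 0 ≤ t ∧ dN V N t < ε }

/-! The resampling density `ρ_{b,c}` is invariant under the reflection `u ↦ b + c - u`, so it has
mean `(b + c)/2` as soon as it has a first moment; it does for `V ∈ 𝒞`, because `V'_+ > V'_-`
makes `V(u - b) + V(c - u)` grow at least linearly in `|u|`. Hence `Q_k` replaces `x_k` by the
average of its two neighbours, and after a summation by parts (using `x_0 = x_N = 0`) `ℒ` acts on
the coefficients of a linear function as half the discrete Dirichlet Laplacian, whose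
eigenvectors are `k ↦ sin(jπk/N)`. -/

theorem Continuous.exists_forall_le_of_eventually_nonneg {β : Type*} [TopologicalSpace β]
    [Nonempty β] {f : β → ℝ} (hf : Continuous f) (h : ∀ᶠ x in cocompact β, 0 ≤ f x) :
    ∃ B, ∀ x, B ≤ f x := by
  obtain ⟨x₀⟩ := ‹Nonempty β›
  obtain ⟨x, hx⟩ := (hf.min continuous_const).exists_forall_le' x₀
    (h.mono fun y hy => by rw [min_eq_right hy]; exact min_le_right _ _)
  exact ⟨min (f x) 0, fun y => (hx y).trans (min_le_left _ _)⟩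

theorem integrable_abs_pow_mul_exp_neg_mul_abs (n : ℕ) {a : ℝ} (ha : 0 < a) :
    Integrable fun u : ℝ => |u| ^ n * exp (-(a * |u|)) := by
  have hn : (-1 : ℝ) < n := by linarith [n.cast_nonneg (α := ℝ)]
  have hcont : Continuous fun u : ℝ => |u| ^ n * exp (-(a * |u|)) := by fun_prop
  refine hcont.locallyIntegrable.integrable_of_isBigO_atTop_of_norm_isNegInvariant
    (g := fun u : ℝ => u ^ (n : ℝ) * exp (-a * u ^ (1 : ℝ))) ?_ ?_
    ⟨Set.Ioi 0, Ioi_mem_atTop 0, integrableOn_rpow_mul_exp_neg_mul_rpow hn one_pos ha⟩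
  · exact ae_of_all _ fun u => by simp
  · refine EventuallyEq.isBigO ?_
    filter_upwards [eventually_gt_atTop 0] with u hu
    simp [abs_of_pos hu, Real.rpow_natCast]

theorem integral_id_mul_eq_half_mul_of_symmetric {w : ℝ → ℝ} {s : ℝ}
    (hsymm : ∀ u, w (s - u) = w u) (hw : Integrable w) (hmul : Integrable fun u => u * w u) :
    ∫ u, u * w u = s / 2 * ∫ u, w u := by
  have hreflect : ∫ u, (s - u) * w u = ∫ u, u * w u := by
    conv_rhs => rw [← integral_sub_left_eq_self _ volume s]
    simp_rw [hsymm]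
  have hsplit : ∫ u, (s - u) * w u = s * (∫ u, w u) - ∫ u, u * w u := by
    rw [← integral_const_mul, ← integral_sub (hw.const_mul s) hmul]
    simp_rw [sub_mul]
  linarith

theorem sum_mul_update_of_mem {s : Finset ℕ} {k : ℕ} (hk : k ∈ s) (a x : ℕ → ℝ) (u : ℝ) :
    ∑ m ∈ s, a m * Function.update x k u m = ∑ m ∈ s, a m * x m + a k * (u - x k) := by
  have hterm : ∀ m, a m * Function.update x k u m
      = a m * x m + if m = k then a k * (u - x k) else 0 := by
    intro m
    rcases eq_or_ne m k with rfl | hm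
    · simp only [Function.update_self, if_true]; ring
    · simp [hm]
  simp_rw [hterm, Finset.sum_add_distrib, Finset.sum_ite_eq', if_pos hk]

/-- Green's identity for the discrete Laplacian on `{1, …, n}`. -/
theorem sum_Icc_mul_add_neighbours (a x : ℕ → ℝ) (n : ℕ) :
    ∑ k ∈ Finset.Icc 1 n, a k * (x (k - 1) + x (k + 1))
      = ∑ k ∈ Finset.Icc 1 n, (a (k - 1) + a (k + 1)) * x k
        + (a n * x (n + 1) - a (n + 1) * x n) - (a 0 * x 1 - a 1 * x 0) := by
  induction n with
  | zero => simp
  | succ n ih =>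
    rw [Finset.sum_Icc_succ_top (by omega), Finset.sum_Icc_succ_top (by omega), ih,
      Nat.add_sub_cancel]
    ring

theorem sum_Icc_mul_add_neighbours_of_boundary {a x : ℕ → ℝ} {N : ℕ} (ha₀ : a 0 = 0)
    (haN : a N = 0) (hx₀ : x 0 = 0) (hxN : x N = 0) :
    ∑ k ∈ Finset.Icc 1 (N - 1), a k * (x (k - 1) + x (k + 1))
      = ∑ k ∈ Finset.Icc 1 (N - 1), (a (k - 1) + a (k + 1)) * x k := by
  rcases N.eq_zero_or_pos with rfl | hN
  · simp
  · rw [sum_Icc_mul_add_neighbours, Nat.sub_add_cancel hN, ha₀, haN, hx₀, hxN]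
    ring

theorem sin_pred_mul_add_sin_succ_mul (θ : ℝ) {k : ℕ} (hk : 1 ≤ k) :
    sin ((k - 1 : ℕ) * θ) + sin ((k + 1 : ℕ) * θ) = 2 * cos θ * sin (k * θ) := by
  rw [Nat.cast_sub hk, Nat.cast_add, Nat.cast_one, sub_mul, add_mul, one_mul, sin_sub, sin_add]
  ring

def heatBathWeight (V : ℝ → ℝ) (b c u : ℝ) : ℝ :=
  exp (-(V (u - b) + V (c - u)))

theorem heatBathWeight_reflect (V : ℝ → ℝ) (b c u : ℝ) :
    heatBathWeight V b c (b + c - u) = heatBathWeight V b c u := by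
  simp only [heatBathWeight]
  ring_nf

theorem rho_eq_heatBathWeight_div (V : ℝ → ℝ) (b c u : ℝ) :
    rho V b c u = heatBathWeight V b c u / ∫ s, heatBathWeight V b c s :=
  rfl

namespace InClassC

variable {V : ℝ → ℝ}

theorem continuous (hV : InClassC V) : Continuous V := by
  simpa using hV.convex.continuousOn isOpen_univ

theorem exists_abs_minorant (hV : InClassC V) :
    ∃ m d B : ℝ, 0 < d ∧ ∀ x, m * x + d * |x| + B ≤ V x := by
  obtain ⟨vm, vp, hbot, htop, hlt⟩ := hV.slopes
  obtain ⟨q₁, hvm, hq₁⟩ := EReal.exists_between_coe_real hlt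
  obtain ⟨q₂, hq₁₂, hvp⟩ := EReal.exists_between_coe_real hq₁
  have hq : q₁ < q₂ := EReal.coe_lt_coe_iff.mp hq₁₂
  -- `(q₁ + q₂)/2 * x + (q₂ - q₁)/2 * |x|` is `q₁ x` for `x < 0` and `q₂ x` for `x > 0`
  let g x := V x - ((q₁ + q₂) / 2 * x + (q₂ - q₁) / 2 * |x|)
  have hbot' : ∀ᶠ x in atBot, 0 ≤ g x := by
    filter_upwards [hbot.eventually_lt_const hvm, eventually_lt_atBot 0] with x hx hneg
    have : q₁ * x < V x := by
      rw [← div_lt_iff_of_neg hneg]; exact_mod_cast hx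
    simp only [g, abs_of_neg hneg]; linarith
  have htop' : ∀ᶠ x in atTop, 0 ≤ g x := by
    filter_upwards [htop.eventually_const_lt hvp, eventually_gt_atTop 0] with x hx hpos
    have : q₂ * x < V x := by
      rw [← lt_div_iff₀ hpos]; exact_mod_cast hx
    simp only [g, abs_of_pos hpos]; linarith
  have hg : Continuous g := by have := hV.continuous; fun_prop
  obtain ⟨B, hB⟩ := hg.exists_forall_le_of_eventually_nonneg
    (by rw [cocompact_eq_atBot_atTop]; exact eventually_sup.mpr ⟨hbot', htop'⟩)
  refine ⟨(q₁ + q₂) / 2, (q₂ - q₁) / 2, B, by linarith, fun x => ?_⟩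
  have := hB x
  simp only [g] at this
  linarith

theorem exists_abs_minorant_pair (hV : InClassC V) (b c : ℝ) :
    ∃ a B : ℝ, 0 < a ∧ ∀ u, a * |u| + B ≤ V (u - b) + V (c - u) := by
  obtain ⟨m, d, B, hd, hV'⟩ := hV.exists_abs_minorant
  refine ⟨2 * d, m * (c - b) - d * (|b| + |c|) + 2 * B, by linarith, fun u => ?_⟩
  have hb := mul_le_mul_of_nonneg_left (abs_sub_abs_le_abs_sub u b) hd.le
  have hc := mul_le_mul_of_nonneg_left (abs_sub_abs_le_abs_sub u c) hd.le
  rw [abs_sub_comm u c] at hc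
  linarith [hV' (u - b), hV' (c - u)]

section Moments

variable (b c : ℝ)

theorem integrable_pow_mul_heatBathWeight (hV : InClassC V) (n : ℕ) :
    Integrable fun u => u ^ n * heatBathWeight V b c u := by
  obtain ⟨a, B, ha, hW⟩ := hV.exists_abs_minorant_pair b c
  have := hV.continuous
  have hcont : Continuous fun u => u ^ n * heatBathWeight V b c u := by
    unfold heatBathWeight; fun_prop
  refine ((integrable_abs_pow_mul_exp_neg_mul_abs n ha).const_mul (exp (-B))).mono'
    hcont.aestronglyMeasurable (ae_of_all _ fun u => ?_)
  rw [heatBathWeight, norm_mul, norm_pow, Real.norm_eq_abs, Real.norm_of_nonneg (exp_pos _).le,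
    mul_left_comm, ← exp_add]
  gcongr
  linarith [hW u]

theorem integrable_heatBathWeight (hV : InClassC V) : Integrable (heatBathWeight V b c) := by
  simpa only [pow_zero, one_mul] using hV.integrable_pow_mul_heatBathWeight b c 0

theorem integrable_id_mul_heatBathWeight (hV : InClassC V) :
    Integrable fun u => u * heatBathWeight V b c u := by
  simpa only [pow_one] using hV.integrable_pow_mul_heatBathWeight b c 1

theorem integral_heatBathWeight_pos (hV : InClassC V) : 0 < ∫ u, heatBathWeight V b c u :=
  integral_exp_pos (f := fun u => -(V (u - b) + V (c - u))) (hV.integrable_heatBathWeight b c)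

theorem integrable_rho (hV : InClassC V) : Integrable (rho V b c) :=
  (hV.integrable_heatBathWeight b c).div_const _

theorem integrable_id_mul_rho (hV : InClassC V) : Integrable fun u => u * rho V b c u := by
  simpa only [rho_eq_heatBathWeight_div, mul_div_assoc] using
    (hV.integrable_id_mul_heatBathWeight b c).div_const (∫ s, heatBathWeight V b c s)

theorem integral_rho (hV : InClassC V) : ∫ u, rho V b c u = 1 := by
  simp_rw [rho_eq_heatBathWeight_div]
  rw [integral_div, div_self (hV.integral_heatBathWeight_pos b c).ne']

theorem integral_id_mul_rho (hV : InClassC V) : ∫ u, u * rho V b c u = (b + c) / 2 := by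
  simp_rw [rho_eq_heatBathWeight_div, ← mul_div_assoc]
  rw [integral_div, integral_id_mul_eq_half_mul_of_symmetric (heatBathWeight_reflect V b c)
    (hV.integrable_heatBathWeight b c) (hV.integrable_id_mul_heatBathWeight b c),
    mul_div_assoc, div_self (hV.integral_heatBathWeight_pos b c).ne', mul_one]

end Moments

theorem Qop_coord (hV : InClassC V) (k : ℕ) (x : ℕ → ℝ) :
    Qop V k (fun z => z k) x = (x (k - 1) + x (k + 1)) / 2 := by
  simp only [Qop, Function.update_self]
  exact hV.integral_id_mul_rho _ _

theorem Qop_linear (hV : InClassC V) {s : Finset ℕ} {k : ℕ} (hk : k ∈ s) (a x : ℕ → ℝ) :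
    Qop V k (fun z => ∑ m ∈ s, a m * z m) x
      = ∑ m ∈ s, a m * x m + a k * ((x (k - 1) + x (k + 1)) / 2 - x k) := by
  simp only [Qop, sum_mul_update_of_mem hk]
  set ρ := rho V (x (k - 1)) (x (k + 1))
  have hsplit : ∀ u, (∑ m ∈ s, a m * x m + a k * (u - x k)) * ρ u
      = (∑ m ∈ s, a m * x m - a k * x k) * ρ u + a k * (u * ρ u) := fun u => by ring
  simp_rw [hsplit]
  rw [integral_add ((hV.integrable_rho _ _).const_mul _)
      ((hV.integrable_id_mul_rho _ _).const_mul _),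
    integral_const_mul, integral_const_mul, hV.integral_rho, hV.integral_id_mul_rho]
  ring

theorem gen_linear (hV : InClassC V) (N : ℕ) (a x : ℕ → ℝ) :
    gen V N (fun z => ∑ m ∈ Finset.Icc 1 (N - 1), a m * z m) x
      = ∑ k ∈ Finset.Icc 1 (N - 1), a k * ((x (k - 1) + x (k + 1)) / 2 - x k) :=
  Finset.sum_congr rfl fun k hk => by rw [hV.Qop_linear hk]; ring

theorem gen_linear_of_boundary (hV : InClassC V) {N : ℕ} {a x : ℕ → ℝ}
    (ha₀ : a 0 = 0) (haN : a N = 0) (hx₀ : x 0 = 0) (hxN : x N = 0) :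
    gen V N (fun z => ∑ m ∈ Finset.Icc 1 (N - 1), a m * z m) x
      = ∑ k ∈ Finset.Icc 1 (N - 1), ((a (k - 1) + a (k + 1)) / 2 - a k) * x k := by
  rw [hV.gen_linear]
  calc ∑ k ∈ Finset.Icc 1 (N - 1), a k * ((x (k - 1) + x (k + 1)) / 2 - x k)
      = (∑ k ∈ Finset.Icc 1 (N - 1), a k * (x (k - 1) + x (k + 1))) / 2
          - ∑ k ∈ Finset.Icc 1 (N - 1), a k * x k := by
        rw [Finset.sum_div, ← Finset.sum_sub_distrib]; ring_nf
    _ = (∑ k ∈ Finset.Icc 1 (N - 1), (a (k - 1) + a (k + 1)) * x k) / 2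
          - ∑ k ∈ Finset.Icc 1 (N - 1), a k * x k := by
        rw [sum_Icc_mul_add_neighbours_of_boundary ha₀ haN hx₀ hxN]
    _ = _ := by
        rw [Finset.sum_div, ← Finset.sum_sub_distrib]
        exact Finset.sum_congr rfl fun k _ => by ring

end InClassC

theorem generator_on_linear_functions_general (V : ℝ → ℝ) (hV : InClassC V) (N : ℕ) (j : ℕ) :
    (∀ x : ℕ → ℝ, x 0 = 0 → x N = 0 →
      gen V N (fun z => ∑ k ∈ Finset.Icc 1 (N - 1), Real.sin (j * k * Real.pi / N) * z k) x =
        -(1 - Real.cos (j * Real.pi / N)) *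
          ∑ k ∈ Finset.Icc 1 (N - 1), Real.sin (j * k * Real.pi / N) * x k) ∧
    (∀ a : ℕ → ℝ, ∃ b : ℕ → ℝ, ∀ x : ℕ → ℝ, x 0 = 0 → x N = 0 →
      gen V N (fun z => ∑ k ∈ Finset.Icc 1 (N - 1), a k * z k) x =
        ∑ k ∈ Finset.Icc 1 (N - 1), b k * x k) ∧
    (∀ k : ℕ, 1 ≤ k → k ≤ N - 1 → ∀ x : ℕ → ℝ,
      Qop V k (fun z => z k) x = (x (k - 1) + x (k + 1)) / 2) := by
  refine ⟨fun x hx₀ hxN => ?_, fun a => ?_, fun k _ _ x => hV.Qop_coord k x⟩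
  · set θ := j * π / N
    have hsin (k : ℕ) : sin (j * k * π / N) = sin (k * θ) := by simp only [θ]; ring_nf
    have hsinN : sin (N * θ) = 0 := by
      rcases eq_or_ne (N : ℝ) 0 with hN | hN
      · simp [hN]
      · rw [show (N : ℝ) * θ = j * π by simp only [θ]; field_simp]
        exact sin_nat_mul_pi j
    simp_rw [hsin]
    rw [hV.gen_linear_of_boundary (a := fun k : ℕ => sin (k * θ)) (by simp) hsinN hx₀ hxN,
      Finset.mul_sum]
    refine Finset.sum_congr rfl fun k hk => ?_
    rw [sin_pred_mul_add_sin_succ_mul θ (Finset.mem_Icc.mp hk).1]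
    ring
  · -- truncate `a` so that it vanishes at `0` and `N`
    let a' k := if k ∈ Finset.Icc 1 (N - 1) then a k else 0
    have ha' : (fun z : ℕ → ℝ => ∑ k ∈ Finset.Icc 1 (N - 1), a k * z k)
        = fun z => ∑ k ∈ Finset.Icc 1 (N - 1), a' k * z k :=
      funext fun z => Finset.sum_congr rfl fun k hk => by simp only [a', if_pos hk]
    refine ⟨fun k => (a' (k - 1) + a' (k + 1)) / 2 - a' k, fun x hx₀ hxN => ?_⟩
    rw [ha', hV.gen_linear_of_boundary (by simp [a']) (by simp [a']; omega) hx₀ hxN]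

/-- **Action of the generator on linear functions.**
For `V ∈ 𝒞`, `N ≥ 2` and `j ∈ {1,…,N-1}`, the function
`f_N^{(j)}(x) = Σ_{k=1}^{N-1} sin(jπk/N) x_k` satisfies
`ℒ f_N^{(j)} = -(1 - cos(jπ/N)) f_N^{(j)}` on `Ω_N`; every linear function of the coordinates is
mapped by `ℒ` (on `Ω_N`) to a linear function; and for the coordinate map `g_k(x) = x_k` one has
`Q_k g_k (x) = (x_{k-1} + x_{k+1})/2`. -/
theorem generator_on_linear_functions (V : ℝ → ℝ) (hV : InClassC V) (N : ℕ) (hN : 2 ≤ N)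
    (j : ℕ) (hj1 : 1 ≤ j) (hj2 : j ≤ N - 1) :
    (∀ x : ℕ → ℝ, x 0 = 0 → x N = 0 →
      gen V N (fun z => ∑ k ∈ Finset.Icc 1 (N - 1), Real.sin (j * k * Real.pi / N) * z k) x =
        -(1 - Real.cos (j * Real.pi / N)) *
          ∑ k ∈ Finset.Icc 1 (N - 1), Real.sin (j * k * Real.pi / N) * x k) ∧
    (∀ a : ℕ → ℝ, ∃ b : ℕ → ℝ, ∀ x : ℕ → ℝ, x 0 = 0 → x N = 0 →
      gen V N (fun z => ∑ k ∈ Finset.Icc 1 (N - 1), a k * z k) x =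
        ∑ k ∈ Finset.Icc 1 (N - 1), b k * x k) ∧
    (∀ k : ℕ, 1 ≤ k → k ≤ N - 1 → ∀ x : ℕ → ℝ,
      Qop V k (fun z => z k) x = (x (k - 1) + x (k + 1)) / 2) :=
  generator_on_linear_functions_general V hV N j

end
end

section
/- (FKG inequality for the interface measure.) For any potential V in the class 𝒞 and any N ≥ 2, if f, g : Ω_N → ℝ are bounded measurable functions that are increasing with respect to the coordinatewise partial order (x ≤ y iff x_k ≤ y_k for all k ∈ {0,…,N}), then π_N(fg) ≥ π_N(f)·π_N(g). -/
/-!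
Convexity of `V` makes `(a, b) ↦ V (a - b)` submodular on `ℝ²`, so the density `e^{-H}` of the
inner coordinates is log-supermodular: `ρ x * ρ y ≤ ρ (x ⊓ y) * ρ (x ⊔ y)`. The Ahlswede–Daykin
four functions theorem for Lebesgue measure on `ℝᵐ` then gives the FKG inequality for nonnegative
increasing functions; bounded ones are shifted to nonnegative ones, which leaves the covariance
unchanged. The four functions theorem itself is proved by integrating out one coordinate at a
time; in dimension one, `∫∫ f(s) g(t)` is symmetrised over `{t < s}` and the two-point inequality
`p + q ≤ P + Q` (from `p, q ≤ P` and `p * q ≤ P * Q`) is applied pointwise.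
-/

open MeasureTheory Filter Real

noncomputable section

open scoped ENNReal NNReal
open ProbabilityTheory

theorem ENNReal.add_le_add_of_mul_le_mul {p q P Q : ℝ≥0∞} (hp : p ≤ P) (hq : q ≤ P)
    (h : p * q ≤ P * Q) : p + q ≤ P + Q := by
  rcases eq_top_or_lt_top P with rfl | hP
  · simp
  rcases eq_top_or_lt_top Q with rfl | hQ
  · simp
  lift P to ℝ≥0 using hP.ne
  lift Q to ℝ≥0 using hQ.ne
  lift p to ℝ≥0 using ne_top_of_le_ne_top ENNReal.coe_ne_top hp
  lift q to ℝ≥0 using ne_top_of_le_ne_top ENNReal.coe_ne_top hq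
  norm_cast at *
  rcases eq_or_ne P 0 with rfl | hP0
  · simp_all
  refine le_of_mul_le_mul_left ?_ (pos_iff_ne_zero.2 hP0)
  calc P * (p + q) = p * P + P * q := by ring
    _ ≤ p * q + P * P := mul_add_mul_le_mul_add_mul hp hq
    _ ≤ P * Q + P * P := by gcongr
    _ = P * (P + Q) := by ring

theorem volume_setOf_fst_eq_snd : (volume : Measure (ℝ × ℝ)) {p | p.1 = p.2} = 0 := by
  rw [Measure.volume_eq_prod,
    Measure.prod_apply (measurableSet_eq_fun measurable_fst measurable_snd)]
  simp [Set.preimage]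

theorem lintegral_eq_setLIntegral_snd_lt_fst {φ : ℝ × ℝ → ℝ≥0∞} (hφ : Measurable φ) :
    ∫⁻ p, φ p = ∫⁻ p in {p | p.2 < p.1}, (φ p + φ p.swap) := by
  set T := {p : ℝ × ℝ | p.2 < p.1}
  have hT : MeasurableSet T := measurableSet_lt measurable_snd measurable_fst
  have hswap : MeasurePreserving Prod.swap (volume : Measure (ℝ × ℝ)) volume := by
    rw [Measure.volume_eq_prod]; exact Measure.measurePreserving_swap
  have hcompl : (Tᶜ : Set (ℝ × ℝ)) =ᵐ[volume] Prod.swap ⁻¹' T := by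
    refine ae_eq_set.2 ⟨measure_mono_null ?_ volume_setOf_fst_eq_snd,
      measure_mono_null ?_ volume_setOf_fst_eq_snd⟩ <;>
    · intro p hp
      simp only [T, Set.mem_sdiff, Set.mem_compl_iff, Set.mem_ofPred_eq, Set.mem_preimage,
        Prod.fst_swap, Prod.snd_swap, not_lt] at hp
      show p.1 = p.2
      linarith [hp.1, hp.2]
  have hTc : ∫⁻ p in Tᶜ, φ p = ∫⁻ p in T, φ p.swap := by
    rw [Measure.restrict_congr_set hcompl]
    simpa using hswap.setLIntegral_comp_preimage hT (hφ.comp measurable_swap)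
  rw [← lintegral_add_compl φ hT, hTc, lintegral_add_left hφ]

theorem four_functions_theorem_lintegral_real {f₁ f₂ f₃ f₄ : ℝ → ℝ≥0∞} (h₁ : Measurable f₁)
    (h₂ : Measurable f₂) (h₃ : Measurable f₃) (h₄ : Measurable f₄)
    (h : ∀ a b, f₁ a * f₂ b ≤ f₃ (a ⊓ b) * f₄ (a ⊔ b)) :
    (∫⁻ a, f₁ a) * ∫⁻ a, f₂ a ≤ (∫⁻ a, f₃ a) * ∫⁻ a, f₄ a := by
  have hprod : ∀ {f g : ℝ → ℝ≥0∞}, Measurable f → Measurable g →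
      (∫⁻ a, f a) * ∫⁻ a, g a = ∫⁻ p in {p : ℝ × ℝ | p.2 < p.1}, (f p.1 * g p.2 + f p.2 * g p.1) :=
    fun {f g} hf hg => by
      calc (∫⁻ a, _) * ∫⁻ a, _ = ∫⁻ p : ℝ × ℝ, f p.1 * g p.2 := by
            rw [Measure.volume_eq_prod, lintegral_prod_mul hf.aemeasurable hg.aemeasurable]
        _ = _ := lintegral_eq_setLIntegral_snd_lt_fst (by fun_prop)
  rw [hprod h₁ h₂, hprod h₃ h₄]
  refine setLIntegral_mono (by fun_prop) fun p (hp : p.2 < p.1) => ?_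
  obtain ⟨s, t⟩ := p
  have hts : t ≤ s := hp.le
  have e₁ : f₁ s * f₂ t ≤ f₃ t * f₄ s := by simpa [hts] using h s t
  have e₂ : f₁ t * f₂ s ≤ f₃ t * f₄ s := by simpa [hts] using h t s
  have e₁₂ : f₁ s * f₂ t * (f₁ t * f₂ s) ≤ f₃ t * f₄ s * (f₃ s * f₄ t) :=
    calc f₁ s * f₂ t * (f₁ t * f₂ s) = f₁ s * f₂ s * (f₁ t * f₂ t) := by ring
      _ ≤ f₃ s * f₄ s * (f₃ t * f₄ t) := mul_le_mul' (by simpa using h s s) (by simpa using h t t)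
      _ = f₃ t * f₄ s * (f₃ s * f₄ t) := by ring
  simpa [add_comm] using ENNReal.add_le_add_of_mul_le_mul e₁ e₂ e₁₂

theorem Fin.insertNth_sup_insertNth {m : ℕ} {α : Type*} [Lattice α] (i : Fin (m + 1)) (a b : α)
    (x y : Fin m → α) :
    i.insertNth (a ⊔ b) (x ⊔ y) = i.insertNth a x ⊔ i.insertNth (α := fun _ => α) b y := by
  ext j
  cases j using Fin.succAboveCases i <;> simp

theorem Fin.insertNth_inf_insertNth {m : ℕ} {α : Type*} [Lattice α] (i : Fin (m + 1)) (a b : α)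
    (x y : Fin m → α) :
    i.insertNth (a ⊓ b) (x ⊓ y) = i.insertNth a x ⊓ i.insertNth (α := fun _ => α) b y := by
  ext j
  cases j using Fin.succAboveCases i <;> simp

theorem lintegral_eq_lintegral_lintegral_insertNth {m : ℕ} (i : Fin (m + 1))
    {φ : (Fin (m + 1) → ℝ) → ℝ≥0∞} (hφ : Measurable φ) :
    ∫⁻ x, φ x = ∫⁻ x, ∫⁻ t, φ (i.insertNth t x) := by
  have he := (volume_preserving_piFinSuccAbove (fun _ : Fin (m + 1) => ℝ) i).symm
  rw [← he.lintegral_comp hφ, Measure.volume_eq_prod]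
  exact lintegral_prod_symm' _ (hφ.comp he.measurable)

theorem four_functions_theorem_lintegral {m : ℕ} {f₁ f₂ f₃ f₄ : (Fin m → ℝ) → ℝ≥0∞}
    (h₁ : Measurable f₁) (h₂ : Measurable f₂) (h₃ : Measurable f₃) (h₄ : Measurable f₄)
    (h : ∀ a b, f₁ a * f₂ b ≤ f₃ (a ⊓ b) * f₄ (a ⊔ b)) :
    (∫⁻ a, f₁ a) * ∫⁻ a, f₂ a ≤ (∫⁻ a, f₃ a) * ∫⁻ a, f₄ a := by
  induction m with
  | zero =>
    rw [Measure.volume_pi_eq_dirac isEmptyElim]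
    simpa [lintegral_dirac, Subsingleton.elim _ (isEmptyElim : Fin 0 → ℝ)] using
      h isEmptyElim isEmptyElim
  | succ m ih =>
    simp only [lintegral_eq_lintegral_lintegral_insertNth 0 h₁,
      lintegral_eq_lintegral_lintegral_insertNth 0 h₂,
      lintegral_eq_lintegral_lintegral_insertNth 0 h₃,
      lintegral_eq_lintegral_lintegral_insertNth 0 h₄]
    refine ih (by fun_prop) (by fun_prop) (by fun_prop) (by fun_prop) fun x y => ?_
    refine four_functions_theorem_lintegral_real (by fun_prop) (by fun_prop) (by fun_prop)
      (by fun_prop) fun s t => ?_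
    rw [Fin.insertNth_inf_insertNth, Fin.insertNth_sup_insertNth]
    exact h _ _

section FKG

variable {m : ℕ} {ρ : (Fin m → ℝ) → ℝ≥0∞}

theorem fkg_lintegral (hρ : Measurable ρ) (hρ_lsm : ∀ a b, ρ a * ρ b ≤ ρ (a ⊓ b) * ρ (a ⊔ b))
    {F G : (Fin m → ℝ) → ℝ≥0∞} (hF : Measurable F) (hG : Measurable G)
    (hF_mono : Monotone F) (hG_mono : Monotone G) :
    (∫⁻ a, F a ∂volume.withDensity ρ) * ∫⁻ a, G a ∂volume.withDensity ρ ≤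
      volume.withDensity ρ Set.univ * ∫⁻ a, F a * G a ∂volume.withDensity ρ := by
  rw [lintegral_withDensity_eq_lintegral_mul _ hρ hF,
    lintegral_withDensity_eq_lintegral_mul _ hρ hG,
    lintegral_withDensity_eq_lintegral_mul _ hρ (g := fun a => F a * G a) (hF.mul hG),
    withDensity_apply _ MeasurableSet.univ, Measure.restrict_univ]
  refine four_functions_theorem_lintegral (hρ.mul hF) (hρ.mul hG) hρ (hρ.mul (hF.mul hG))
    fun a b => ?_
  simp only [Pi.mul_apply]
  calc ρ a * F a * (ρ b * G b) = ρ a * ρ b * (F a * G b) := by ring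
    _ ≤ ρ (a ⊓ b) * ρ (a ⊔ b) * (F (a ⊔ b) * G (a ⊔ b)) :=
      mul_le_mul' (hρ_lsm a b) (mul_le_mul' (hF_mono le_sup_left) (hG_mono le_sup_right))
    _ = ρ (a ⊓ b) * (ρ (a ⊔ b) * (F (a ⊔ b) * G (a ⊔ b))) := by ring

theorem fkg_integral_of_nonneg [IsFiniteMeasure (volume.withDensity ρ)] (hρ : Measurable ρ)
    (hρ_lsm : ∀ a b, ρ a * ρ b ≤ ρ (a ⊓ b) * ρ (a ⊔ b)) {F G : (Fin m → ℝ) → ℝ}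
    (hF : Measurable F) (hG : Measurable G) (hF₀ : 0 ≤ F) (hG₀ : 0 ≤ G)
    (hFi : Integrable F (volume.withDensity ρ)) (hGi : Integrable G (volume.withDensity ρ))
    (hFGi : Integrable (fun a => F a * G a) (volume.withDensity ρ))
    (hF_mono : Monotone F) (hG_mono : Monotone G) :
    (∫ a, F a ∂volume.withDensity ρ) * ∫ a, G a ∂volume.withDensity ρ ≤
      (volume.withDensity ρ).real Set.univ * ∫ a, F a * G a ∂volume.withDensity ρ := by
  have key := fkg_lintegral hρ hρ_lsm hF.ennreal_ofReal hG.ennreal_ofReal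
    (ENNReal.ofReal_mono.comp hF_mono) (ENNReal.ofReal_mono.comp hG_mono)
  simp_rw [← ENNReal.ofReal_mul (hF₀ _)] at key
  rw [← ofReal_integral_eq_lintegral_ofReal hFi (ae_of_all _ hF₀),
    ← ofReal_integral_eq_lintegral_ofReal hGi (ae_of_all _ hG₀),
    ← ofReal_integral_eq_lintegral_ofReal hFGi (ae_of_all _ fun a => mul_nonneg (hF₀ a) (hG₀ a)),
    ← ofReal_measureReal, ← ENNReal.ofReal_mul (integral_nonneg hF₀),
    ← ENNReal.ofReal_mul measureReal_nonneg] at key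
  exact (ENNReal.ofReal_le_ofReal_iff (mul_nonneg measureReal_nonneg
    (integral_nonneg fun a => mul_nonneg (hF₀ a) (hG₀ a)))).1 key

theorem fkg_covariance_nonneg [IsProbabilityMeasure (volume.withDensity ρ)] (hρ : Measurable ρ)
    (hρ_lsm : ∀ a b, ρ a * ρ b ≤ ρ (a ⊓ b) * ρ (a ⊔ b)) {F G : (Fin m → ℝ) → ℝ} {C D : ℝ}
    (hF : Measurable F) (hG : Measurable G) (hFC : ∀ a, |F a| ≤ C) (hGD : ∀ a, |G a| ≤ D)
    (hF_mono : Monotone F) (hG_mono : Monotone G) :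
    0 ≤ cov[F, G; volume.withDensity ρ] := by
  have hFL : MemLp F 2 (volume.withDensity ρ) :=
    .of_bound hF.aestronglyMeasurable C (ae_of_all _ hFC)
  have hGL : MemLp G 2 (volume.withDensity ρ) :=
    .of_bound hG.aestronglyMeasurable D (ae_of_all _ hGD)
  have hFL' : MemLp (fun a => F a + C) 2 (volume.withDensity ρ) := hFL.add (memLp_const C)
  have hGL' : MemLp (fun a => G a + D) 2 (volume.withDensity ρ) := hGL.add (memLp_const D)
  rw [← covariance_add_const_left (hFL.integrable one_le_two) C,
    ← covariance_add_const_right (hGL.integrable one_le_two) D, covariance_eq_sub hFL' hGL',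
    sub_nonneg]
  simpa using fkg_integral_of_nonneg hρ hρ_lsm (hF.add_const C) (hG.add_const D)
    (fun a => neg_le_iff_add_nonneg.1 (abs_le.1 (hFC a)).1)
    (fun a => neg_le_iff_add_nonneg.1 (abs_le.1 (hGD a)).1)
    (hFL'.integrable one_le_two) (hGL'.integrable one_le_two) (hFL'.integrable_mul hGL')
    (fun _ _ hab => add_le_add_left (hF_mono hab) C)
    (fun _ _ hab => add_le_add_left (hG_mono hab) D)

end FKG

theorem ConvexOn.map_add_map_sub_le {𝕜 : Type*} [Field 𝕜] [LinearOrder 𝕜] [IsStrictOrderedRing 𝕜]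
    {s : Set 𝕜} {f : 𝕜 → 𝕜} (hf : ConvexOn 𝕜 s f) {a b u : 𝕜} (ha : a ∈ s) (hb : b ∈ s)
    (hu : u ∈ Set.Icc a b) : f u + f (a + b - u) ≤ f a + f b := by
  obtain ⟨hau, hub⟩ := hu
  rcases hau.eq_or_lt with rfl | hau
  · simp
  set t := (u - a) / (b - a)
  have hba : 0 < b - a := by linarith
  have ht₀ : 0 ≤ t := div_nonneg (by linarith) hba.le
  have ht₁ : t ≤ 1 := (div_le_one hba).2 (by linarith)
  have h₁ := hf.2 ha hb (sub_nonneg.2 ht₁) ht₀ (sub_add_cancel 1 t)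
  have h₂ := hf.2 ha hb ht₀ (sub_nonneg.2 ht₁) (add_sub_cancel t 1)
  have e₁ : (1 - t) * a + t * b = u := by simp only [t]; field_simp; ring
  have e₂ : t * a + (1 - t) * b = a + b - u := by linear_combination -e₁
  simp only [smul_eq_mul, e₁, e₂] at h₁ h₂
  linarith

theorem ConvexOn.map_sup_sub_sup_add_map_inf_sub_inf_le {V : ℝ → ℝ}
    (hV : ConvexOn ℝ Set.univ V) (a a' b b' : ℝ) :
    V (a ⊔ a' - b ⊔ b') + V (a ⊓ a' - b ⊓ b') ≤ V (a - b) + V (a' - b') := by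
  rcases le_total a a' with ha | ha <;> rcases le_total b b' with hb | hb
  · simp [ha, hb, add_comm]
  · have h := hV.map_add_map_sub_le (Set.mem_univ (a - b)) (Set.mem_univ (a' - b'))
      (u := a' - b) ⟨by linarith, by linarith⟩
    rw [show a - b + (a' - b') - (a' - b) = a - b' by ring] at h
    simpa [ha, hb] using h
  · have h := hV.map_add_map_sub_le (Set.mem_univ (a' - b')) (Set.mem_univ (a - b))
      (u := a - b') ⟨by linarith, by linarith⟩
    rw [show a' - b' + (a - b) - (a - b') = a' - b by ring] at h
    simpa [ha, hb, add_comm] using h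
  · simp [ha, hb]

theorem measurable_conf (N : ℕ) : Measurable (conf N) := by
  refine measurable_pi_iff.2 fun k => ?_
  unfold conf
  split_ifs
  · exact measurable_pi_apply _
  · exact measurable_const

theorem conf_sup (N : ℕ) (x y : Fin (N - 1) → ℝ) : conf N (x ⊔ y) = conf N x ⊔ conf N y := by
  ext k
  by_cases h : 1 ≤ k ∧ k ≤ N - 1 <;> simp [conf, h]

theorem conf_inf (N : ℕ) (x y : Fin (N - 1) → ℝ) : conf N (x ⊓ y) = conf N x ⊓ conf N y := by
  ext k
  by_cases h : 1 ≤ k ∧ k ≤ N - 1 <;> simp [conf, h]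

theorem monotone_conf (N : ℕ) : Monotone (conf N) := fun x y hxy => by
  rw [← sup_eq_right.2 hxy, conf_sup]
  exact le_sup_left

theorem continuous_Ham {V : ℝ → ℝ} (hV : Continuous V) (N : ℕ) : Continuous (Ham V N) := by
  unfold Ham
  fun_prop

theorem Ham_sup_add_Ham_inf_le {V : ℝ → ℝ} (hV : ConvexOn ℝ Set.univ V) (N : ℕ) (x y : ℕ → ℝ) :
    Ham V N (x ⊔ y) + Ham V N (x ⊓ y) ≤ Ham V N x + Ham V N y := by
  simp only [Ham, ← Finset.sum_add_distrib]
  exact Finset.sum_le_sum fun k _ =>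
    hV.map_sup_sub_sup_add_map_inf_sub_inf_le (x (k + 1)) (y (k + 1)) (x k) (y k)

theorem Zpart_nonneg {V : ℝ → ℝ} {N : ℕ} : 0 ≤ Zpart V N :=
  integral_nonneg fun _ => Real.exp_nonneg _

def gibbsDensity (V : ℝ → ℝ) (N : ℕ) (y : Fin (N - 1) → ℝ) : ℝ≥0∞ :=
  ENNReal.ofReal (Real.exp (-(Ham V N (conf N y))) / Zpart V N)

theorem piN_eq_map_withDensity (V : ℝ → ℝ) (N : ℕ) :
    piN V N = (volume.withDensity (gibbsDensity V N)).map (conf N) := rfl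

theorem measurable_gibbsDensity {V : ℝ → ℝ} (hV : Continuous V) (N : ℕ) :
    Measurable (gibbsDensity V N) :=
  (((continuous_Ham hV N).measurable.comp (measurable_conf N)).neg.exp.div_const _).ennreal_ofReal

theorem gibbsDensity_mul_le {V : ℝ → ℝ} (hV : ConvexOn ℝ Set.univ V) (N : ℕ)
    (x y : Fin (N - 1) → ℝ) :
    gibbsDensity V N x * gibbsDensity V N y ≤
      gibbsDensity V N (x ⊓ y) * gibbsDensity V N (x ⊔ y) := by
  have hH := Ham_sup_add_Ham_inf_le hV N (conf N x) (conf N y)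
  rw [← conf_sup, ← conf_inf] at hH
  simp only [gibbsDensity, ← ENNReal.ofReal_mul (div_nonneg (Real.exp_nonneg _) Zpart_nonneg)]
  refine ENNReal.ofReal_le_ofReal ?_
  rw [div_mul_div_comm, div_mul_div_comm, ← Real.exp_add, ← Real.exp_add]
  exact div_le_div_of_nonneg_right (Real.exp_le_exp.2 (by linarith)) (mul_self_nonneg _)

theorem isProbabilityMeasure_withDensity_gibbsDensity {V : ℝ → ℝ} {N : ℕ} (hZ : Zpart V N ≠ 0) :
    IsProbabilityMeasure (volume.withDensity (gibbsDensity V N)) := by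
  have hint := (Integrable.of_integral_ne_zero hZ).div_const (Zpart V N)
  constructor
  unfold gibbsDensity
  rw [withDensity_apply _ MeasurableSet.univ, Measure.restrict_univ,
    ← ofReal_integral_eq_lintegral_ofReal hint
      (ae_of_all _ fun _ => div_nonneg (Real.exp_nonneg _) Zpart_nonneg),
    integral_div, ← Zpart, div_self hZ, ENNReal.ofReal_one]

theorem isProbabilityMeasure_piN {V : ℝ → ℝ} {N : ℕ} (hZ : Zpart V N ≠ 0) :
    IsProbabilityMeasure (piN V N) := by
  have := isProbabilityMeasure_withDensity_gibbsDensity hZ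
  rw [piN_eq_map_withDensity]
  exact Measure.isProbabilityMeasure_map (measurable_conf N).aemeasurable

theorem piN_eq_zero {V : ℝ → ℝ} {N : ℕ} (hZ : Zpart V N = 0) : piN V N = 0 := by
  simp [piN, hZ]

theorem fkg_inequality_general (V : ℝ → ℝ) (hV : InClassC V) (N : ℕ)
    (f g : (ℕ → ℝ) → ℝ) (hf : Measurable f) (hg : Measurable g)
    (hfb : ∃ M : ℝ, ∀ x, |f x| ≤ M) (hgb : ∃ M : ℝ, ∀ x, |g x| ≤ M)
    (hfm : ∀ x y : ℕ → ℝ, (∀ k ≤ N, x k ≤ y k) → f x ≤ f y)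
    (hgm : ∀ x y : ℕ → ℝ, (∀ k ≤ N, x k ≤ y k) → g x ≤ g y) :
    (∫ x, f x ∂piN V N) * (∫ x, g x ∂piN V N) ≤ ∫ x, f x * g x ∂piN V N := by
  by_cases hZ : Zpart V N = 0
  · simp [piN_eq_zero hZ]
  have hVc : Continuous V := continuousOn_univ.1 (hV.convex.continuousOn isOpen_univ)
  have := isProbabilityMeasure_withDensity_gibbsDensity hZ
  have := isProbabilityMeasure_piN hZ
  obtain ⟨Mf, hMf⟩ := hfb
  obtain ⟨Mg, hMg⟩ := hgb
  have hcov : 0 ≤ cov[f, g; piN V N] := by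
    rw [piN_eq_map_withDensity, covariance_map hf.aestronglyMeasurable hg.aestronglyMeasurable
      (measurable_conf N).aemeasurable]
    exact fkg_covariance_nonneg (measurable_gibbsDensity hVc N) (gibbsDensity_mul_le hV.convex N)
      (hf.comp (measurable_conf N)) (hg.comp (measurable_conf N)) (fun _ => hMf _) (fun _ => hMg _)
      (fun x y hxy => hfm _ _ fun k _ => monotone_conf N hxy k)
      (fun x y hxy => hgm _ _ fun k _ => monotone_conf N hxy k)
  rwa [covariance_eq_sub (.of_bound hf.aestronglyMeasurable Mf (ae_of_all _ hMf))
    (.of_bound hg.aestronglyMeasurable Mg (ae_of_all _ hMg)), sub_nonneg] at hcov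

/-- **FKG inequality for the interface measure.** For `V ∈ 𝒞`, `N ≥ 2`, and bounded measurable
functions `f, g` that are increasing w.r.t. the coordinatewise partial order on the coordinates
`0,…,N`, one has `π_N(fg) ≥ π_N(f) π_N(g)`. -/
theorem fkg_inequality (V : ℝ → ℝ) (hV : InClassC V) (N : ℕ) (hN : 2 ≤ N)
    (f g : (ℕ → ℝ) → ℝ) (hf : Measurable f) (hg : Measurable g)
    (hfb : ∃ M : ℝ, ∀ x, |f x| ≤ M) (hgb : ∃ M : ℝ, ∀ x, |g x| ≤ M)
    (hfm : ∀ x y : ℕ → ℝ, (∀ k ≤ N, x k ≤ y k) → f x ≤ f y)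
    (hgm : ∀ x y : ℕ → ℝ, (∀ k ≤ N, x k ≤ y k) → g x ≤ g y) :
    (∫ x, f x ∂piN V N) * (∫ x, g x ∂piN V N) ≤ ∫ x, f x * g x ∂piN V N :=
  fkg_inequality_general V hV N f g hf hg hfb hgb hfm hgm

end
end

section
/- (Submodularity of the Hamiltonian.) Let V : ℝ → ℝ be convex and let N ≥ 1. For all x, y ∈ ℝ^{N+1}, define H(x) = Σ_{k=1}^N V(x_k − x_{k-1}), and max(x,y), min(x,y) ∈ ℝ^{N+1} by max(x,y)_i = max(x_i,y_i) and min(x,y)_i = min(x_i,y_i). Then H(max(x,y)) + H(min(x,y)) ≤ H(x) + H(y). -/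
open MeasureTheory Filter Real

noncomputable section

lemma conv_aux (V : ℝ → ℝ) (hV : ConvexOn ℝ Set.univ V) (a b c : ℝ)
    (h1 : a ≤ c) (h2 : c ≤ b) : V c + V (a + b - c) ≤ V a + V b := by
  have hc : c ∈ segment ℝ a b := by
    rw [segment_eq_Icc (h1.trans h2)]; exact ⟨h1, h2⟩
  obtain ⟨u, v, hu, hv, huv, hcc⟩ := hc
  have h3 := hV.2 (Set.mem_univ a) (Set.mem_univ b) hu hv huv
  have h4 := hV.2 (Set.mem_univ a) (Set.mem_univ b) hv hu (by linarith)
  simp only [smul_eq_mul] at h3 h4 hcc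
  have hu1 : u = 1 - v := by linarith
  subst hu1
  have hd : a + b - c = v * a + (1 - v) * b := by linear_combination hcc
  rw [hcc] at h3
  rw [hd]
  have hs : (1 - v) * V a + v * V b + (v * V a + (1 - v) * V b) = V a + V b := by ring
  linarith

lemma key (V : ℝ → ℝ) (hV : ConvexOn ℝ Set.univ V) (x y x' y' : ℝ) :
    V (max x' y' - max x y) + V (min x' y' - min x y) ≤ V (x' - x) + V (y' - y) := by
  set a := x' - x with ha
  set b := y' - y with hb
  set c := max x' y' - max x y with hcdef
  have hmm : min x' y' - min x y = a + b - c := by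
    have h1 : max x' y' + min x' y' = x' + y' := max_add_min x' y'
    have h2 : max x y + min x y = x + y := max_add_min x y
    rw [ha, hb, hcdef]; linarith
  rw [hmm]
  have hlb : min a b ≤ c := by
    rcases le_total x y with h | h <;> rcases le_total x' y' with h' | h' <;>
      simp only [ha, hb, hcdef, max_eq_right, max_eq_left, min_le_iff, h, h'] <;>
    · first
      | (left; linarith)
      | (right; linarith)
  have hub : c ≤ max a b := by
    rcases le_total x y with h | h <;> rcases le_total x' y' with h' | h' <;>
      simp only [ha, hb, hcdef, max_eq_right, max_eq_left, le_max_iff, h, h'] <;>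
    · first
      | (left; linarith)
      | (right; linarith)
  rcases le_total a b with hab | hab
  · have := conv_aux V hV a b c (by simpa [min_eq_left hab] using hlb)
      (by simpa [max_eq_right hab] using hub)
    linarith
  · have := conv_aux V hV b a c (by simpa [min_eq_right hab] using hlb)
      (by simpa [max_eq_left hab] using hub)
    have he : b + a - c = a + b - c := by ring
    rw [he] at this
    linarith

/-- **Submodularity of the Hamiltonian.** For convex `V` and any `x, y ∈ ℝ^{N+1}`,
`H(max(x,y)) + H(min(x,y)) ≤ H(x) + H(y)`, with coordinatewise max and min. -/
theorem hamiltonian_submodular (V : ℝ → ℝ) (hV : ConvexOn ℝ Set.univ V) (N : ℕ) (hN : 1 ≤ N)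
    (x y : ℕ → ℝ) :
    Ham V N (fun k => max (x k) (y k)) + Ham V N (fun k => min (x k) (y k)) ≤
      Ham V N x + Ham V N y := by
  unfold Ham
  rw [← Finset.sum_add_distrib, ← Finset.sum_add_distrib]
  exact Finset.sum_le_sum fun k _ => key V hV (x k) (y k) (x (k + 1)) (y (k + 1))

end
end

section
/- (Exponential tails and variance of the resampling density.) Let V be in the class 𝒞. There exist constants α, C > 0 such that for all s ≥ 0 and all b, c ∈ ℝ: ∫_{max(b,c)+s}^{∞} ρ_{b,c}(u) du ≤ C·e^{−αs} and ∫_{−∞}^{min(b,c)−s} ρ_{b,c}(u) du ≤ C·e^{−αs}. Moreover, there exists a constant C' > 0 such that for all b, c ∈ ℝ, ∫_ℝ (u − (b+c)/2)² ρ_{b,c}(u) du ≤ C'·(|b−c|+1)². -/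
/-!
Convexity and the gap between the asymptotic slopes of `V` give `p < q` and `R` such that `V`
grows with slope at least `q` on `[R, ∞)` and at most `p` on `(-∞, -R]`. Hence the potential
`w(u) = V(u - b) + V(c - u)` grows at rate `α = q - p` on `[M, ∞)`, `M = max b c + R`, and is
symmetric about `(b + c) / 2`. On `[t, ∞)`, `t ≥ M`, the weight `e^{-w}` is dominated by
`e^{-w(t)} e^{-α(u - t)}`, while the normalizer is at least `e^{-w(M + 1)}`, the least value of the
weight on `[M, M + 1]`; comparing the two gives the exponential tails. For the second moment the
factor `(u - (b + c) / 2)²` is absorbed into half of the rate `α`, and the remaining central part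
has half-width `M + 1 - (b + c) / 2 = |b - c| / 2 + R + 1`.
-/

open MeasureTheory Filter Real

noncomputable section

open Set

lemma sq_le_mul_exp {β x : ℝ} (hβ : 0 < β) (hx : 0 ≤ x) :
    x ^ 2 ≤ 2 / β ^ 2 * exp (β * x) := by
  have h := quadratic_le_exp_of_nonneg (mul_nonneg hβ.le hx)
  rw [div_mul_eq_mul_div, le_div_iff₀ (by positivity)]
  nlinarith [mul_nonneg hβ.le hx]

lemma sq_sub_le_mul_exp {α t u : ℝ} (hα : 0 < α) (htu : t ≤ u) (m : ℝ) :
    (u - m) ^ 2 ≤ (16 / α ^ 2 + 2 * (t - m) ^ 2) * exp (α / 2 * (u - t)) := by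
  have hsq := sq_le_mul_exp (half_pos hα) (sub_nonneg.2 htu)
  have hE := one_le_exp (mul_nonneg (half_pos hα).le (sub_nonneg.2 htu))
  have h16 : 2 * (2 / (α / 2) ^ 2) = 16 / α ^ 2 := by field_simp; norm_num
  nlinarith [sq_nonneg (u - t - (t - m)), sq_nonneg (t - m)]

def GrowsAtRate (f : ℝ → ℝ) (α M : ℝ) : Prop :=
  ∀ ⦃u v : ℝ⦄, M ≤ u → u ≤ v → f u + α * (v - u) ≤ f v

namespace GrowsAtRate

variable {f g : ℝ → ℝ} {α β M N t : ℝ}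

lemma add (hf : GrowsAtRate f α M) (hg : GrowsAtRate g β N) :
    GrowsAtRate (fun u => f u + g u) (α + β) (max M N) := fun u v hu huv => by
  have hfu := hf (le_of_max_le_left hu) huv
  have hgu := hg (le_of_max_le_right hu) huv
  linarith

lemma comp_sub_const (hf : GrowsAtRate f α M) (b : ℝ) :
    GrowsAtRate (fun u => f (u - b)) α (M + b) := fun u v hu huv => by
  have h := hf (u := u - b) (v := v - b) (by linarith) (by linarith)
  rwa [sub_sub_sub_cancel_right] at h

lemma sub_linear (hf : GrowsAtRate f α M) (β t : ℝ) :
    GrowsAtRate (fun u => f u - β * (u - t)) (α - β) M := fun u v hu huv => by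
  have h := hf hu huv
  linarith

lemma monotoneOn (hf : GrowsAtRate f α M) (hα : 0 ≤ α) : MonotoneOn f (Ici M) :=
  fun u hu v _ huv => by nlinarith [hf hu huv]

lemma exp_neg_le (hf : GrowsAtRate f α M) (ht : M ≤ t) {u : ℝ} (hu : t ≤ u) :
    exp (-f u) ≤ exp (α * t - f t) * exp (-α * u) := by
  rw [← exp_add, exp_le_exp]
  linarith [hf ht hu]

lemma integrableOn_exp_neg (hf : GrowsAtRate f α M) (hα : 0 < α) (hc : Continuous f)
    (ht : M ≤ t) : IntegrableOn (fun u => exp (-f u)) (Ioi t) := by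
  refine ((integrableOn_exp_mul_Ioi (neg_neg_of_pos hα) t).const_mul
    (exp (α * t - f t))).mono' (by fun_prop) ?_
  refine (ae_restrict_iff' measurableSet_Ioi).2 (Eventually.of_forall fun u hu => ?_)
  rw [norm_of_nonneg (exp_pos _).le]
  exact hf.exp_neg_le ht (le_of_lt hu)

lemma setIntegral_exp_neg_le (hf : GrowsAtRate f α M) (hα : 0 < α) (ht : M ≤ t) :
    ∫ u in Ioi t, exp (-f u) ≤ exp (-f t) / α := by
  have hdom : ∫ u in Ioi t, exp (α * t - f t) * exp (-α * u) = exp (-f t) / α := by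
    rw [integral_const_mul, integral_exp_mul_Ioi (neg_neg_of_pos hα), neg_div_neg_eq,
      mul_div_assoc', ← exp_add]
    ring_nf
  rw [← hdom]
  refine integral_mono_of_nonneg (Eventually.of_forall fun u => (exp_pos _).le)
    ((integrableOn_exp_mul_Ioi (neg_neg_of_pos hα) t).const_mul _) ?_
  exact (ae_restrict_iff' measurableSet_Ioi).2
    (Eventually.of_forall fun u hu => hf.exp_neg_le ht (le_of_lt hu))

lemma sq_sub_mul_exp_neg_le {α t u : ℝ} (hα : 0 < α) (htu : t ≤ u) (m y : ℝ) :
    (u - m) ^ 2 * exp (-y) ≤ (16 / α ^ 2 + 2 * (t - m) ^ 2) * exp (-(y - α / 2 * (u - t))) := by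
  rw [neg_sub', sub_neg_eq_add, exp_add, ← mul_assoc, mul_right_comm]
  exact mul_le_mul_of_nonneg_right (sq_sub_le_mul_exp hα htu m) (exp_pos _).le

lemma integrableOn_sq_mul_exp_neg (hf : GrowsAtRate f α M) (hα : 0 < α) (hc : Continuous f)
    (ht : M ≤ t) (m : ℝ) : IntegrableOn (fun u => (u - m) ^ 2 * exp (-f u)) (Ioi t) := by
  have hg := (hf.sub_linear (α / 2) t).integrableOn_exp_neg (by linarith) (by fun_prop) ht
  refine (hg.const_mul (16 / α ^ 2 + 2 * (t - m) ^ 2)).mono' (by fun_prop) ?_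
  refine (ae_restrict_iff' measurableSet_Ioi).2 (Eventually.of_forall fun u hu => ?_)
  rw [norm_of_nonneg (by positivity)]
  exact sq_sub_mul_exp_neg_le hα (le_of_lt hu) m (f u)

lemma setIntegral_sq_mul_exp_neg_le (hf : GrowsAtRate f α M) (hα : 0 < α) (hc : Continuous f)
    (ht : M ≤ t) (m : ℝ) :
    ∫ u in Ioi t, (u - m) ^ 2 * exp (-f u) ≤
      (16 / α ^ 2 + 2 * (t - m) ^ 2) * (2 / α) * exp (-f t) := by
  have hg := hf.sub_linear (α / 2) t
  calc ∫ u in Ioi t, (u - m) ^ 2 * exp (-f u)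
      ≤ ∫ u in Ioi t, (16 / α ^ 2 + 2 * (t - m) ^ 2) * exp (-(f u - α / 2 * (u - t))) := by
        refine setIntegral_mono_on (hf.integrableOn_sq_mul_exp_neg hα hc ht m)
          ((hg.integrableOn_exp_neg (by linarith) (by fun_prop) ht).const_mul _)
          measurableSet_Ioi fun u hu => ?_
        exact sq_sub_mul_exp_neg_le hα (le_of_lt hu) m (f u)
    _ ≤ (16 / α ^ 2 + 2 * (t - m) ^ 2) * (exp (-(f t - α / 2 * (t - t))) / (α - α / 2)) := by
        rw [integral_const_mul]
        exact mul_le_mul_of_nonneg_left (hg.setIntegral_exp_neg_le (by linarith) ht)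
          (by positivity)
    _ = (16 / α ^ 2 + 2 * (t - m) ^ 2) * (2 / α) * exp (-f t) := by
        rw [sub_self, mul_zero, sub_zero]
        field_simp
        ring

lemma exp_neg_le_integral (hf : GrowsAtRate f α M) (hα : 0 ≤ α)
    (hint : Integrable fun u => exp (-f u)) : exp (-f (M + 1)) ≤ ∫ u, exp (-f u) := by
  calc exp (-f (M + 1)) = ∫ _ in Icc M (M + 1), exp (-f (M + 1)) := by simp
    _ ≤ ∫ u in Icc M (M + 1), exp (-f u) :=
        setIntegral_mono_on (integrableOn_const (by simp)) hint.integrableOn measurableSet_Icc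
          fun u hu => exp_le_exp.2 (neg_le_neg (hf.monotoneOn hα hu.1 (hu.1.trans hu.2) hu.2))
    _ ≤ ∫ u, exp (-f u) :=
        setIntegral_le_integral hint (Eventually.of_forall fun u => (exp_pos _).le)

end GrowsAtRate

section Reflection

variable {g : ℝ → ℝ} {k : ℝ}

lemma preimage_sub_left_Ici (k a : ℝ) : (fun u : ℝ => k - u) ⁻¹' Ici a = Iic (k - a) := by
  ext u
  simp [le_sub_comm]

lemma setIntegral_Iic_eq_setIntegral_Ici_of_symm (hg : ∀ u, g (k - u) = g u) (a : ℝ) :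
    ∫ u in Iic (k - a), g u = ∫ u in Ici a, g u := by
  have h := (Measure.measurePreserving_sub_left volume k).setIntegral_preimage_emb
    (MeasurableEquiv.subLeft k).measurableEmbedding g (Ici a)
  simpa only [preimage_sub_left_Ici, hg] using h

lemma integrableOn_Iic_of_symm (hg : ∀ u, g (k - u) = g u) {a : ℝ}
    (h : IntegrableOn g (Ici a)) : IntegrableOn g (Iic (k - a)) := by
  have h' := ((Measure.measurePreserving_sub_left volume k).integrableOn_comp_preimage
    (MeasurableEquiv.subLeft k).measurableEmbedding).2 h
  simpa only [preimage_sub_left_Ici, Function.comp_def, hg] using h'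

lemma integrableOn_Iic_half_of_symm (hg : ∀ u, g (k - u) = g u)
    (h : IntegrableOn g (Ioi (k / 2))) : IntegrableOn g (Iic (k / 2)) := by
  simpa only [sub_half] using
    integrableOn_Iic_of_symm hg ((integrableOn_Ici_iff_integrableOn_Ioi).2 h)

lemma integrable_of_symm (hg : ∀ u, g (k - u) = g u) (h : IntegrableOn g (Ioi (k / 2))) :
    Integrable g := by
  rw [← integrableOn_univ, ← Iic_union_Ioi (a := k / 2)]
  exact (integrableOn_Iic_half_of_symm hg h).union h

lemma integral_eq_two_mul_setIntegral_Ioi_of_symm (hg : ∀ u, g (k - u) = g u)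
    (h : IntegrableOn g (Ioi (k / 2))) : ∫ u, g u = 2 * ∫ u in Ioi (k / 2), g u := by
  have hleft : ∫ u in Iic (k / 2), g u = ∫ u in Ioi (k / 2), g u := by
    rw [← integral_Ici_eq_integral_Ioi, ← setIntegral_Iic_eq_setIntegral_Ici_of_symm hg,
      sub_half]
  rw [← intervalIntegral.integral_Iic_add_Ioi (integrableOn_Iic_half_of_symm hg h) h, hleft,
    two_mul]

end Reflection

def gibbs (f : ℝ → ℝ) (u : ℝ) : ℝ := exp (-f u) / ∫ s, exp (-f s)

section Gibbs

variable {f : ℝ → ℝ} {α M k : ℝ}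

lemma gibbs_nonneg (f : ℝ → ℝ) (u : ℝ) : 0 ≤ gibbs f u :=
  div_nonneg (exp_pos _).le (integral_nonneg fun _ => (exp_pos _).le)

lemma continuous_gibbs (hc : Continuous f) : Continuous (gibbs f) := by
  unfold gibbs
  fun_prop

lemma gibbs_comp_sub_left (hsymm : ∀ u, f (k - u) = f u) (u : ℝ) :
    gibbs f (k - u) = gibbs f u := by
  simp only [gibbs, hsymm]

lemma integrable_gibbs (hint : Integrable fun u => exp (-f u)) : Integrable (gibbs f) :=
  hint.div_const _

lemma integral_gibbs (hint : Integrable fun u => exp (-f u)) : ∫ u, gibbs f u = 1 := by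
  simp only [gibbs]
  rw [integral_div, div_self (integral_exp_pos hint).ne']

lemma setIntegral_gibbs_le_one (hint : Integrable fun u => exp (-f u)) (s : Set ℝ) :
    ∫ u in s, gibbs f u ≤ 1 :=
  (setIntegral_le_integral (integrable_gibbs hint)
    (Eventually.of_forall (gibbs_nonneg f))).trans_eq (integral_gibbs hint)

namespace GrowsAtRate

lemma integrable_exp_neg_of_symm (hf : GrowsAtRate f α M) (hα : 0 < α) (hc : Continuous f)
    (hsymm : ∀ u, f (k - u) = f u) : Integrable fun u => exp (-f u) := by
  refine integrable_of_symm (k := k) (fun u => by simp only [hsymm]) ?_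
  have hsub : Ioi (k / 2) ⊆ Icc (k / 2) M ∪ Ioi M := fun u hu =>
    (le_or_gt u M).imp (fun h => ⟨le_of_lt hu, h⟩) id
  exact ((by fun_prop : Continuous fun u => exp (-f u)).integrableOn_Icc.union
    (hf.integrableOn_exp_neg hα hc le_rfl)).mono_set hsub

lemma setIntegral_Ici_gibbs_le (hf : GrowsAtRate f α M) (hα : 0 < α)
    (hint : Integrable fun u => exp (-f u)) (t : ℝ) :
    ∫ u in Ici t, gibbs f u ≤ (1 + 1 / α) * exp (-α * (t - (M + 1))) := by
  rcases le_or_gt t (M + 1) with ht | ht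
  · calc ∫ u in Ici t, gibbs f u ≤ 1 := setIntegral_gibbs_le_one hint _
      _ ≤ (1 + 1 / α) * exp (-α * (t - (M + 1))) :=
        one_le_mul_of_one_le_of_one_le (by simp [hα.le]) (one_le_exp (by nlinarith))
  have hgrow := hf (le_add_of_nonneg_right zero_le_one) ht.le
  calc ∫ u in Ici t, gibbs f u = (∫ u in Ioi t, exp (-f u)) / ∫ u, exp (-f u) := by
        rw [integral_Ici_eq_integral_Ioi, ← integral_div]
        rfl
    _ ≤ (exp (-f t) / α) / exp (-f (M + 1)) :=
        div_le_div₀ (by positivity) (hf.setIntegral_exp_neg_le hα (by linarith)) (exp_pos _)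
          (hf.exp_neg_le_integral hα.le hint)
    _ = exp (-(f t - f (M + 1))) / α := by
        rw [div_right_comm, ← exp_sub, neg_sub_neg, neg_sub]
    _ ≤ exp (-α * (t - (M + 1))) / α :=
        div_le_div_of_nonneg_right (exp_le_exp.2 (by linarith)) hα.le
    _ ≤ (1 + 1 / α) * exp (-α * (t - (M + 1))) := by
        rw [div_eq_mul_one_div, mul_comm]
        exact mul_le_mul_of_nonneg_right (by linarith) (exp_pos _).le

lemma setIntegral_Ioi_sq_mul_gibbs_le (hf : GrowsAtRate f α M) (hα : 0 < α) (hc : Continuous f)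
    (hint : Integrable fun u => exp (-f u)) (m : ℝ) :
    ∫ u in Ioi (M + 1), (u - m) ^ 2 * gibbs f u ≤
      (16 / α ^ 2 + 2 * (M + 1 - m) ^ 2) * (2 / α) := by
  calc ∫ u in Ioi (M + 1), (u - m) ^ 2 * gibbs f u
      = (∫ u in Ioi (M + 1), (u - m) ^ 2 * exp (-f u)) / ∫ u, exp (-f u) := by
        simp only [gibbs, mul_div_assoc']
        exact integral_div _ _
    _ ≤ ((16 / α ^ 2 + 2 * (M + 1 - m) ^ 2) * (2 / α) * exp (-f (M + 1))) /
          exp (-f (M + 1)) :=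
        div_le_div₀ (by positivity)
          (hf.setIntegral_sq_mul_exp_neg_le hα hc (le_add_of_nonneg_right zero_le_one) m)
          (exp_pos _) (hf.exp_neg_le_integral hα.le hint)
    _ = (16 / α ^ 2 + 2 * (M + 1 - m) ^ 2) * (2 / α) := mul_div_cancel_right₀ _ (exp_pos _).ne'

lemma integral_sq_mul_gibbs_le (hf : GrowsAtRate f α M) (hα : 0 < α) (hc : Continuous f)
    (hsymm : ∀ u, f (k - u) = f u) (hM : k / 2 ≤ M) :
    ∫ u, (u - k / 2) ^ 2 * gibbs f u ≤
      2 * ((M + 1 - k / 2) ^ 2 + (16 / α ^ 2 + 2 * (M + 1 - k / 2) ^ 2) * (2 / α)) := by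
  set m := k / 2
  have hint := hf.integrable_exp_neg_of_symm hα hc hsymm
  have hmid : IntegrableOn (fun u => (u - m) ^ 2 * gibbs f u) (Ioc m (M + 1)) :=
    (((continuous_sub_right m).pow 2).mul (continuous_gibbs hc)).integrableOn_Icc.mono_set
      Ioc_subset_Icc_self
  have htail : IntegrableOn (fun u => (u - m) ^ 2 * gibbs f u) (Ioi (M + 1)) := by
    simp only [gibbs, mul_div_assoc']
    exact (hf.integrableOn_sq_mul_exp_neg hα hc (le_add_of_nonneg_right zero_le_one) m).div_const _
  have hmid_le : ∫ u in Ioc m (M + 1), (u - m) ^ 2 * gibbs f u ≤ (M + 1 - m) ^ 2 := by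
    calc ∫ u in Ioc m (M + 1), (u - m) ^ 2 * gibbs f u
        ≤ ∫ u in Ioc m (M + 1), (M + 1 - m) ^ 2 * gibbs f u :=
          setIntegral_mono_on hmid ((integrable_gibbs hint).integrableOn.const_mul _)
            measurableSet_Ioc fun u hu => mul_le_mul_of_nonneg_right
              (pow_le_pow_left₀ (by linarith [hu.1]) (by linarith [hu.2]) 2) (gibbs_nonneg f u)
      _ ≤ (M + 1 - m) ^ 2 := by
        rw [integral_const_mul]
        exact mul_le_of_le_one_right (sq_nonneg _) (setIntegral_gibbs_le_one hint _)
  have hsplit : Ioc m (M + 1) ∪ Ioi (M + 1) = Ioi m := Ioc_union_Ioi_eq_Ioi (by linarith)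
  have hsymm' : ∀ u, (k - u - m) ^ 2 * gibbs f (k - u) = (u - m) ^ 2 * gibbs f u := fun u => by
    rw [gibbs_comp_sub_left hsymm, show k - u - m = -(u - m) by ring, neg_sq]
  rw [integral_eq_two_mul_setIntegral_Ioi_of_symm hsymm' (hsplit ▸ hmid.union htail), ← hsplit,
    setIntegral_union Ioc_disjoint_Ioi_same measurableSet_Ioi hmid htail]
  linarith [hf.setIntegral_Ioi_sq_mul_gibbs_le hα hc hint m]

end GrowsAtRate

end Gibbs

lemma ConvexOn.growsAtRate_of_eventually_lt_div {V : ℝ → ℝ} (hV : ConvexOn ℝ univ V)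
    {q r : ℝ} (hqr : q < r) (h : ∀ᶠ x in atTop, r < V x / x) :
    ∀ᶠ R in atTop, GrowsAtRate V q R := by
  have hev : ∀ᶠ x in atTop, 0 < x ∧ q * x + V 0 ≤ V x := by
    filter_upwards [h, eventually_gt_atTop 0, eventually_ge_atTop (|V 0| / (r - q))]
      with x hx hx0 hxV
    rw [lt_div_iff₀ hx0] at hx
    rw [div_le_iff₀ (sub_pos.2 hqr)] at hxV
    exact ⟨hx0, by linarith [le_abs_self (V 0)]⟩
  obtain ⟨R₀, hR₀⟩ := eventually_atTop.1 hev
  refine eventually_atTop.2 ⟨R₀, fun R hR u v hu huv => ?_⟩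
  obtain ⟨hu0, hqu⟩ := hR₀ u (hR.trans hu)
  rcases huv.eq_or_lt with rfl | huv
  · simp
  have hq0 : q ≤ (V u - V 0) / (u - 0) := by
    rw [sub_zero, le_div_iff₀ hu0]
    linarith
  have hslope := hq0.trans (hV.slope_mono_adjacent (mem_univ 0) (mem_univ v) hu0 huv)
  rw [le_div_iff₀ (sub_pos.2 huv)] at hslope
  linarith

lemma InClassC.exists_growsAtRate {V : ℝ → ℝ} (hV : InClassC V) : ∃ p q, p < q ∧
    ∀ᶠ R in atTop, GrowsAtRate V q R ∧ GrowsAtRate (fun x => V (-x)) (-p) R := by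
  obtain ⟨vm, vp, hbot, htop, hlt⟩ := hV.slopes
  obtain ⟨a, hvma, havp⟩ := EReal.exists_between_coe_real hlt
  obtain ⟨b, hab, hbvp⟩ := EReal.exists_between_coe_real havp
  have hab : a < b := by exact_mod_cast hab
  have htop' : ∀ᶠ x in atTop, b < V x / x :=
    (htop.eventually_const_lt hbvp).mono fun x hx => by exact_mod_cast hx
  have hbot' : ∀ᶠ x in atTop, -a < V (-x) / x :=
    ((hbot.comp tendsto_neg_atTop_atBot).eventually_lt_const hvma).mono fun x hx => by
      have hx' : V (-x) / -x < a := EReal.coe_lt_coe_iff.1 hx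
      rw [div_neg] at hx'
      linarith
  have hconv : ConvexOn ℝ univ fun x => V (-x) := hV.convex.comp_linearMap (-LinearMap.id)
  refine ⟨(2 * a + b) / 3, (a + 2 * b) / 3, by linarith, ?_⟩
  exact (hV.convex.growsAtRate_of_eventually_lt_div (by linarith) htop').and
    (hconv.growsAtRate_of_eventually_lt_div (by linarith) hbot')

def resamplingPotential (V : ℝ → ℝ) (b c u : ℝ) : ℝ := V (u - b) + V (c - u)

section ResamplingPotential

variable {V : ℝ → ℝ} {p q R : ℝ}

lemma rho_eq_gibbs (V : ℝ → ℝ) (b c : ℝ) : rho V b c = gibbs (resamplingPotential V b c) :=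
  rfl

lemma resamplingPotential_symm (V : ℝ → ℝ) (b c u : ℝ) :
    resamplingPotential V b c (b + c - u) = resamplingPotential V b c u := by
  simp only [resamplingPotential, show b + c - u - b = c - u by ring,
    show c - (b + c - u) = u - b by ring, add_comm]

lemma continuous_resamplingPotential (hV : Continuous V) (b c : ℝ) :
    Continuous (resamplingPotential V b c) := by
  unfold resamplingPotential
  fun_prop

lemma growsAtRate_resamplingPotential (hq : GrowsAtRate V q R)
    (hp : GrowsAtRate (fun x => V (-x)) (-p) R) (b c : ℝ) :
    GrowsAtRate (resamplingPotential V b c) (q - p) (max b c + R) := by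
  have h := (hq.comp_sub_const b).add (hp.comp_sub_const c)
  simp only [neg_sub, ← sub_eq_add_neg, add_comm R] at h
  rwa [max_add_add_right] at h

lemma setIntegral_Iic_rho_eq_setIntegral_Ici (V : ℝ → ℝ) (b c s : ℝ) :
    ∫ u in Iic (min b c - s), rho V b c u = ∫ u in Ici (max b c + s), rho V b c u := by
  rw [show min b c - s = b + c - (max b c + s) by rw [← min_add_max b c]; ring, rho_eq_gibbs,
    setIntegral_Iic_eq_setIntegral_Ici_of_symm
      (gibbs_comp_sub_left (resamplingPotential_symm V b c))]

lemma setIntegral_Ici_rho_le (hq : GrowsAtRate V q R) (hp : GrowsAtRate (fun x => V (-x)) (-p) R)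
    (hc : Continuous V) (hpq : p < q) (b c s : ℝ) :
    ∫ u in Ici (max b c + s), rho V b c u ≤
      (1 + 1 / (q - p)) * exp ((q - p) * (R + 1)) * exp (-(q - p) * s) := by
  have hw := growsAtRate_resamplingPotential hq hp b c
  have hα : 0 < q - p := sub_pos.2 hpq
  rw [rho_eq_gibbs, mul_assoc, ← exp_add]
  convert hw.setIntegral_Ici_gibbs_le hα (hw.integrable_exp_neg_of_symm hα
    (continuous_resamplingPotential hc b c) (resamplingPotential_symm V b c)) _ using 3
  ring

lemma integral_sq_mul_rho_le (hq : GrowsAtRate V q R) (hp : GrowsAtRate (fun x => V (-x)) (-p) R)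
    (hc : Continuous V) (hpq : p < q) (hR : 0 ≤ R) (b c : ℝ) :
    ∫ u, (u - (b + c) / 2) ^ 2 * rho V b c u ≤
      2 * ((R + 1) ^ 2 + (16 / (q - p) ^ 2 + 2 * (R + 1) ^ 2) * (2 / (q - p))) *
        (|b - c| + 1) ^ 2 := by
  have hα : 0 < q - p := sub_pos.2 hpq
  have hd := abs_nonneg (b - c)
  have hmax : max b c - (b + c) / 2 = |b - c| / 2 := by
    rw [← max_sub_min_eq_abs', ← min_add_max b c]
    ring
  have hT : (max b c + R + 1 - (b + c) / 2) ^ 2 ≤ ((R + 1) * (|b - c| + 1)) ^ 2 :=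
    pow_le_pow_left₀ (by linarith) (by nlinarith) 2
  have h16 : 16 / (q - p) ^ 2 ≤ 16 / (q - p) ^ 2 * (|b - c| + 1) ^ 2 :=
    le_mul_of_one_le_right (by positivity) (one_le_pow₀ (by linarith))
  calc ∫ u, (u - (b + c) / 2) ^ 2 * rho V b c u
      ≤ 2 * ((max b c + R + 1 - (b + c) / 2) ^ 2 + (16 / (q - p) ^ 2 +
          2 * (max b c + R + 1 - (b + c) / 2) ^ 2) * (2 / (q - p))) :=
        (growsAtRate_resamplingPotential hq hp b c).integral_sq_mul_gibbs_le hα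
          (continuous_resamplingPotential hc b c) (resamplingPotential_symm V b c)
          (by linarith)
    _ ≤ 2 * (((R + 1) * (|b - c| + 1)) ^ 2 + (16 / (q - p) ^ 2 * (|b - c| + 1) ^ 2 +
          2 * ((R + 1) * (|b - c| + 1)) ^ 2) * (2 / (q - p))) := by
        gcongr
    _ = 2 * ((R + 1) ^ 2 + (16 / (q - p) ^ 2 + 2 * (R + 1) ^ 2) * (2 / (q - p))) *
          (|b - c| + 1) ^ 2 := by
        ring

end ResamplingPotential

/-- **Exponential tails and variance of the resampling density.** For `V ∈ 𝒞` there are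
`α, C > 0` such that for all `s ≥ 0` and `b, c`:
`∫_{max(b,c)+s}^∞ ρ_{b,c} ≤ C e^{-αs}` and `∫_{-∞}^{min(b,c)-s} ρ_{b,c} ≤ C e^{-αs}`; moreover
there is `C' > 0` with `∫ (u-(b+c)/2)² ρ_{b,c}(u) du ≤ C' (|b-c|+1)²`. -/
theorem resampling_density_tails (V : ℝ → ℝ) (hV : InClassC V) :
    (∃ α > (0 : ℝ), ∃ C > (0 : ℝ), ∀ s : ℝ, 0 ≤ s → ∀ b c : ℝ,
      (∫ u in Set.Ici (max b c + s), rho V b c u) ≤ C * Real.exp (-α * s) ∧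
      (∫ u in Set.Iic (min b c - s), rho V b c u) ≤ C * Real.exp (-α * s)) ∧
    (∃ C' > (0 : ℝ), ∀ b c : ℝ,
      (∫ u : ℝ, (u - (b + c) / 2) ^ 2 * rho V b c u) ≤ C' * (|b - c| + 1) ^ 2) := by
  have hc : Continuous V := continuousOn_univ.1 (hV.convex.continuousOn isOpen_univ)
  obtain ⟨p, q, hpq, hev⟩ := hV.exists_growsAtRate
  obtain ⟨R, hR, hq, hp⟩ := ((eventually_ge_atTop 0).and hev).exists
  have hα : 0 < q - p := sub_pos.2 hpq
  refine ⟨⟨q - p, hα, (1 + 1 / (q - p)) * exp ((q - p) * (R + 1)), by positivity,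
    fun s _ b c => ?_⟩, ⟨_, by positivity, integral_sq_mul_rho_le hq hp hc hpq hR⟩⟩
  rw [setIntegral_Iic_rho_eq_setIntegral_Ici, and_self]
  exact setIntegral_Ici_rho_le hq hp hc hpq b c s

end
end

section
/- (Total variation continuity of the resampling density.) Let V be in the class 𝒞 with growth exponent K. There exists a constant C > 0 such that for all b, b', c, c' ∈ ℝ, writing Δ = (|b'−b| + |c'−c|)/2, one has (1/2)·∫_ℝ |ρ_{b,c}(u) − ρ_{b',c'}(u)| du ≤ C·Δ·max(1, |c−b|^K). -/
open MeasureTheory Filter Real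

noncomputable section

/-!
Write `ρ_{b,c} = e^{-H}/Z` with `H(u) = V(u - b) + V(c - u)` (`resamplingEnergy V b c u`).
Tilting `V` by a slope `m` strictly between its asymptotic slopes makes both `V(x) - m x` and
`V(-x) + m x` grow at a fixed rate far out, by convexity; since the tilts of the two terms of `H`
cancel, `H` increases at a rate `ε` to the right of `max b c + A` and decreases at rate `ε` to the
left of `min b c - A`, with `ε` and `A` independent of `b, c`. Comparing `e^{-H}` on the tails
with its mass on the adjacent unit interval bounds the moments
`∫ (5 + |u - b| + |c - u|)^K e^{-H} ≤ M (1 + |c - b|)^K Z`.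

Convexity and the growth bound make `V` Lipschitz with constant `O((1 + R)^K)` on `[-R, R]`, so
for shifts at most `2` one has `|H_{b,c} - H_{b',c'}| ≤ 2C (5 + |u - b| + |c - u|)^K
(|b' - b| + |c' - c|)`. Together with `|e^{-x} - e^{-y}| ≤ |x - y| (e^{-x} + e^{-y})` and the
moment bound this gives the estimate; for larger shifts the total variation is at most `1`.
-/

open Set

section GrowthTails

variable {h : ℝ → ℝ} {ε K r l : ℝ}

lemma integrableOn_one_add_rpow_mul_exp_neg_Ioi (hε : 0 < ε) (hK : 0 ≤ K) :
    IntegrableOn (fun t => (1 + t) ^ K * exp (-(ε * t))) (Ioi 1) := by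
  have hdom : IntegrableOn (fun t : ℝ => 2 ^ K * (t ^ K * exp (-ε * t ^ (1 : ℝ)))) (Ioi 1) :=
    ((integrableOn_rpow_mul_exp_neg_mul_rpow (by linarith) one_pos hε).mono_set
      (Ioi_subset_Ioi zero_le_one)).const_mul _
  refine hdom.mono' (by fun_prop) ((ae_restrict_mem measurableSet_Ioi).mono fun t ht => ?_)
  have ht : (1 : ℝ) < t := ht
  rw [Real.norm_of_nonneg (by positivity), rpow_one, neg_mul, ← mul_assoc,
    ← mul_rpow zero_le_two (by linarith)]
  gcongr
  linarith

lemma setIntegral_one_add_rpow_mul_exp_neg_nonneg :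
    0 ≤ ∫ t in Ioi (1 : ℝ), (1 + t) ^ K * exp (-(ε * t)) :=
  setIntegral_nonneg measurableSet_Ioi fun t ht => by
    have : (0 : ℝ) ≤ 1 + t := by linarith [show (1 : ℝ) < t from ht]
    positivity

def tailMoment (K ε : ℝ) : ℝ :=
  2 ^ K + exp ε * ∫ t in Ioi (1 : ℝ), (1 + t) ^ K * exp (-(ε * t))

lemma tailMoment_nonneg : 0 ≤ tailMoment K ε := by
  have := setIntegral_one_add_rpow_mul_exp_neg_nonneg (K := K) (ε := ε)
  unfold tailMoment
  positivity

/-- Averaging the growth condition over `[0, 1]`. -/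
lemma exp_neg_le_of_growth (hh : Continuous h) (hε : 0 ≤ ε)
    (hgrow : ∀ u v, 0 ≤ u → u ≤ v → h u + ε * (v - u) ≤ h v) {v : ℝ} (hv : 1 ≤ v) :
    exp (-h v) ≤ exp (ε - ε * v) * ∫ s in Icc (0 : ℝ) 1, exp (-h s) := by
  have hle : ∀ s ∈ Icc (0 : ℝ) 1, exp (-h v) * exp (ε * v - ε) ≤ exp (-h s) := by
    intro s hs
    rw [← exp_add, exp_le_exp]
    nlinarith [hgrow s v hs.1 (by linarith [hs.2]), hs.2]
  have hint := setIntegral_ge_of_const_le (μ := volume) measurableSet_Icc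
    measure_Icc_lt_top.ne hle hh.neg.rexp.integrableOn_Icc
  rw [volume_real_Icc_of_le zero_le_one, sub_zero, one_smul] at hint
  calc exp (-h v) = exp (ε - ε * v) * (exp (-h v) * exp (ε * v - ε)) := by
        rw [mul_left_comm, ← exp_add]; simp
    _ ≤ _ := by gcongr

lemma one_add_rpow_mul_exp_neg_le_of_growth (hh : Continuous h) (hε : 0 ≤ ε)
    (hgrow : ∀ u v, 0 ≤ u → u ≤ v → h u + ε * (v - u) ≤ h v) {v : ℝ} (hv : 1 ≤ v) :
    (1 + v) ^ K * exp (-h v) ≤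
      (exp ε * ∫ s in Icc (0 : ℝ) 1, exp (-h s)) * ((1 + v) ^ K * exp (-(ε * v))) := by
  rw [mul_left_comm]
  gcongr
  calc exp (-h v) ≤ exp (ε - ε * v) * ∫ s in Icc (0 : ℝ) 1, exp (-h s) :=
        exp_neg_le_of_growth hh hε hgrow hv
    _ = _ := by rw [sub_eq_add_neg, exp_add]; ring

lemma continuous_one_add_max_rpow_mul_exp_neg (hh : Continuous h) (hK : 0 ≤ K) :
    Continuous fun u => (1 + max u 0) ^ K * exp (-h u) :=
  ((continuous_const.add (continuous_id.max continuous_const)).rpow_const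
    fun _ => Or.inr hK).mul hh.neg.rexp

lemma one_add_max_rpow_le_two_rpow (hK : 0 ≤ K) {u : ℝ} (hu : u ≤ 1) :
    (1 + max u 0) ^ K ≤ 2 ^ K := by
  gcongr
  linarith [max_le hu zero_le_one]

lemma integrable_one_add_max_rpow_mul_exp_neg (hh : Continuous h) (hε : 0 < ε) (hK : 0 ≤ K)
    (hgrow : ∀ u v, 0 ≤ u → u ≤ v → h u + ε * (v - u) ≤ h v)
    (hint : Integrable fun u => exp (-h u)) :
    Integrable fun u => (1 + max u 0) ^ K * exp (-h u) := by
  have hmeas := (continuous_one_add_max_rpow_mul_exp_neg hh hK).aestronglyMeasurable (μ := volume)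
  have hIic : IntegrableOn (fun u => (1 + max u 0) ^ K * exp (-h u)) (Iic 1) :=
    (hint.integrableOn.const_mul (2 ^ K)).mono' hmeas.restrict
      ((ae_restrict_mem measurableSet_Iic).mono fun u hu => by
        rw [Real.norm_of_nonneg (by positivity)]
        exact mul_le_mul_of_nonneg_right (one_add_max_rpow_le_two_rpow hK hu) (exp_pos _).le)
  have hIoi : IntegrableOn (fun u => (1 + max u 0) ^ K * exp (-h u)) (Ioi 1) :=
    ((integrableOn_one_add_rpow_mul_exp_neg_Ioi hε hK).const_mul _).mono' hmeas.restrict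
      ((ae_restrict_mem measurableSet_Ioi).mono fun u (hu : 1 < u) => by
        rw [Real.norm_of_nonneg (by positivity), max_eq_left (by linarith)]
        exact one_add_rpow_mul_exp_neg_le_of_growth hh hε.le hgrow hu.le)
  rw [← integrableOn_univ, ← Iic_union_Ioi (a := (1 : ℝ)), integrableOn_union]
  exact ⟨hIic, hIoi⟩

lemma integral_one_add_max_rpow_mul_exp_neg_le (hh : Continuous h) (hε : 0 < ε) (hK : 0 ≤ K)
    (hgrow : ∀ u v, 0 ≤ u → u ≤ v → h u + ε * (v - u) ≤ h v)
    (hint : Integrable fun u => exp (-h u)) :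
    ∫ u, (1 + max u 0) ^ K * exp (-h u) ≤ tailMoment K ε * ∫ u, exp (-h u) := by
  have hw := integrable_one_add_max_rpow_mul_exp_neg hh hε hK hgrow hint
  have hJ := (integrableOn_one_add_rpow_mul_exp_neg_Ioi hε hK).const_mul
    (exp ε * ∫ s in Icc (0 : ℝ) 1, exp (-h s))
  have hsub : ∀ s, ∫ u in s, exp (-h u) ≤ ∫ u, exp (-h u) := fun s =>
    setIntegral_le_integral hint (.of_forall fun _ => (exp_pos _).le)
  have hIic : ∫ u in Iic (1 : ℝ), (1 + max u 0) ^ K * exp (-h u) ≤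
      2 ^ K * ∫ u, exp (-h u) := by
    calc _ ≤ ∫ u in Iic (1 : ℝ), 2 ^ K * exp (-h u) :=
          setIntegral_mono_on hw.integrableOn (hint.integrableOn.const_mul _) measurableSet_Iic
            fun u hu => mul_le_mul_of_nonneg_right (one_add_max_rpow_le_two_rpow hK hu)
              (exp_pos _).le
      _ ≤ _ := by
          rw [integral_const_mul]
          exact mul_le_mul_of_nonneg_left (hsub _) (by positivity)
  have hIoi : ∫ u in Ioi (1 : ℝ), (1 + max u 0) ^ K * exp (-h u) ≤
      exp ε * (∫ t in Ioi (1 : ℝ), (1 + t) ^ K * exp (-(ε * t))) * ∫ u, exp (-h u) := by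
    calc _ ≤ ∫ u in Ioi (1 : ℝ), (exp ε * ∫ s in Icc (0 : ℝ) 1, exp (-h s)) *
          ((1 + u) ^ K * exp (-(ε * u))) :=
          setIntegral_mono_on hw.integrableOn hJ measurableSet_Ioi fun u (hu : 1 < u) => by
            rw [max_eq_left (by linarith)]
            exact one_add_rpow_mul_exp_neg_le_of_growth hh hε.le hgrow hu.le
      _ = exp ε * (∫ t in Ioi (1 : ℝ), (1 + t) ^ K * exp (-(ε * t))) *
          ∫ s in Icc (0 : ℝ) 1, exp (-h s) := by
          rw [integral_const_mul]; ring
      _ ≤ _ := mul_le_mul_of_nonneg_left (hsub _)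
          (mul_nonneg (exp_pos _).le setIntegral_one_add_rpow_mul_exp_neg_nonneg)
  rw [← integral_add_compl measurableSet_Iic hw, compl_Iic, tailMoment]
  linarith

lemma integrable_and_integral_le_of_growth_right (hh : Continuous h) (hε : 0 < ε) (hK : 0 ≤ K)
    (hgrow : ∀ u v, r ≤ u → u ≤ v → h u + ε * (v - u) ≤ h v)
    (hint : Integrable fun u => exp (-h u)) :
    Integrable (fun u => (1 + max (u - r) 0) ^ K * exp (-h u)) ∧
      ∫ u, (1 + max (u - r) 0) ^ K * exp (-h u) ≤ tailMoment K ε * ∫ u, exp (-h u) := by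
  have hh' : Continuous fun u => h (u + r) := hh.comp (continuous_add_const r)
  have hgrow' : ∀ u v, 0 ≤ u → u ≤ v → h (u + r) + ε * (v - u) ≤ h (v + r) :=
    fun u v hu huv => by simpa using hgrow (u + r) (v + r) (by linarith) (by linarith)
  have hint' := hint.comp_add_right r
  constructor
  · simpa using (integrable_one_add_max_rpow_mul_exp_neg hh' hε hK hgrow' hint').comp_sub_right r
  · rw [← integral_add_right_eq_self _ r, ← integral_add_right_eq_self (fun u => exp (-h u)) r]
    simpa using integral_one_add_max_rpow_mul_exp_neg_le hh' hε hK hgrow' hint'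

lemma integrable_and_integral_le_of_growth_left (hh : Continuous h) (hε : 0 < ε) (hK : 0 ≤ K)
    (hgrow : ∀ u v, u ≤ v → v ≤ l → h v + ε * (v - u) ≤ h u)
    (hint : Integrable fun u => exp (-h u)) :
    Integrable (fun u => (1 + max (l - u) 0) ^ K * exp (-h u)) ∧
      ∫ u, (1 + max (l - u) 0) ^ K * exp (-h u) ≤ tailMoment K ε * ∫ u, exp (-h u) := by
  have hh' : Continuous fun u => h (l - u) := hh.comp (continuous_sub_left l)
  have hgrow' : ∀ u v, 0 ≤ u → u ≤ v → h (l - u) + ε * (v - u) ≤ h (l - v) :=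
    fun u v hu huv => by simpa [add_comm] using hgrow (l - v) (l - u) (by linarith) (by linarith)
  have hint' := hint.comp_sub_left l
  constructor
  · simpa using (integrable_one_add_max_rpow_mul_exp_neg hh' hε hK hgrow' hint').comp_sub_left l
  · rw [← integral_sub_left_eq_self _ volume l,
      ← integral_sub_left_eq_self (fun u => exp (-h u)) volume l]
    simpa using integral_one_add_max_rpow_mul_exp_neg_le hh' hε hK hgrow' hint'

lemma integrable_exp_neg_of_growth (hh : Continuous h) (hε : 0 < ε)
    (hright : ∀ u v, r ≤ u → u ≤ v → h u + ε * (v - u) ≤ h v)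
    (hleft : ∀ u v, u ≤ v → v ≤ l → h v + ε * (v - u) ≤ h u) :
    Integrable fun u => exp (-h u) := by
  refine hh.neg.rexp.locallyIntegrable.integrable_of_isBigO_atBot_atTop
    (g := fun u => exp (ε * u)) ?_ ⟨Iic 0, Iic_mem_atBot 0, integrableOn_exp_mul_Iic hε 0⟩
    (g' := fun u => exp (-ε * u)) ?_ ⟨Ioi 0, Ioi_mem_atTop 0, exp_neg_integrableOn_Ioi 0 hε⟩
  · refine Asymptotics.IsBigO.of_bound (exp (-h l - ε * l)) ?_
    filter_upwards [eventually_le_atBot l] with u hu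
    rw [norm_of_nonneg (exp_pos _).le, norm_of_nonneg (exp_pos _).le, ← exp_add, exp_le_exp]
    linarith [hleft u l hu le_rfl]
  · refine Asymptotics.IsBigO.of_bound (exp (-h r + ε * r)) ?_
    filter_upwards [eventually_ge_atTop r] with u hu
    rw [norm_of_nonneg (exp_pos _).le, norm_of_nonneg (exp_pos _).le, ← exp_add, exp_le_exp]
    linarith [hright r u le_rfl hu]

end GrowthTails

section Normalize

variable {α : Type*} [MeasurableSpace α] {μ : Measure α} {f g w : α → ℝ}

lemma integral_abs_div_integral_sub_le (hf : Integrable f μ) (hg : Integrable g μ) (hg0 : 0 ≤ g)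
    (hZf : 0 < ∫ x, f x ∂μ) (hZg : 0 < ∫ x, g x ∂μ) :
    ∫ x, |f x / ∫ y, f y ∂μ - g x / ∫ y, g y ∂μ| ∂μ ≤
      2 * ((∫ x, |f x - g x| ∂μ) / ∫ x, f x ∂μ) := by
  set Zf := ∫ x, f x ∂μ
  set Zg := ∫ x, g x ∂μ
  set D := ∫ x, |f x - g x| ∂μ
  have hpt : ∀ x, |f x / Zf - g x / Zg| ≤ |f x - g x| / Zf + |Zg - Zf| / (Zf * Zg) * g x := by
    intro x
    have : f x / Zf - g x / Zg = (f x - g x) / Zf + (Zg - Zf) / (Zf * Zg) * g x := by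
      field_simp; ring
    rw [this]
    refine (abs_add_le _ _).trans_eq ?_
    rw [abs_mul, abs_div, abs_div, abs_of_pos hZf, abs_of_pos (mul_pos hZf hZg),
      abs_of_nonneg (hg0 x)]
  have hZ : |Zg - Zf| ≤ D := by
    calc |Zg - Zf| = |∫ x, (g x - f x) ∂μ| := by rw [integral_sub hg hf]
      _ ≤ ∫ x, |g x - f x| ∂μ := abs_integral_le_integral_abs
      _ = D := by simp_rw [abs_sub_comm (g _)]; rfl
  have hint : Integrable (fun x => |f x - g x| / Zf) μ := (hf.sub hg).abs.div_const Zf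
  calc ∫ x, |f x / Zf - g x / Zg| ∂μ
      ≤ ∫ x, (|f x - g x| / Zf + |Zg - Zf| / (Zf * Zg) * g x) ∂μ :=
        integral_mono ((hf.div_const _).sub (hg.div_const _)).abs
          (hint.add (hg.const_mul _)) hpt
    _ = D / Zf + |Zg - Zf| / Zf := by
        rw [integral_add hint (hg.const_mul _), integral_div, integral_const_mul]
        change D / Zf + |Zg - Zf| / (Zf * Zg) * Zg = _
        field_simp
    _ ≤ 2 * (D / Zf) := by rw [two_mul]; gcongr

lemma integral_abs_div_integral_sub_le_two (hf : Integrable f μ) (hg : Integrable g μ)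
    (hf0 : 0 ≤ f) (hg0 : 0 ≤ g) (hZf : 0 < ∫ x, f x ∂μ) (hZg : 0 < ∫ x, g x ∂μ) :
    ∫ x, |f x / ∫ y, f y ∂μ - g x / ∫ y, g y ∂μ| ∂μ ≤ 2 := by
  have hf' := hf.div_const (∫ y, f y ∂μ)
  have hg' := hg.div_const (∫ y, g y ∂μ)
  calc _ ≤ ∫ x, (f x / ∫ y, f y ∂μ + g x / ∫ y, g y ∂μ) ∂μ :=
        integral_mono (hf'.sub hg').abs (hf'.add hg') fun x => by
          have := div_nonneg (hf0 x) hZf.le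
          have := div_nonneg (hg0 x) hZg.le
          exact abs_sub_le_iff.2 ⟨by linarith, by linarith⟩
    _ = 2 := by
        rw [integral_add hf' hg', integral_div, integral_div, div_self hZf.ne', div_self hZg.ne']
        norm_num

lemma integral_abs_div_integral_sub_le_of_abs_sub_le (hf : Integrable f μ) (hg : Integrable g μ)
    (hf0 : 0 ≤ f) (hg0 : 0 ≤ g) (hZf : 0 < ∫ x, f x ∂μ) (hZg : 0 < ∫ x, g x ∂μ)
    (hw0 : 0 ≤ w) (hwf : Integrable (fun x => w x * f x) μ)
    (hwg : Integrable (fun x => w x * g x) μ)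
    (hfg : ∀ x, |f x - g x| ≤ w x * f x + w x * g x) :
    ∫ x, |f x / ∫ y, f y ∂μ - g x / ∫ y, g y ∂μ| ∂μ ≤
      2 * ((∫ x, w x * f x ∂μ) / ∫ x, f x ∂μ +
        (∫ x, w x * g x ∂μ) / ∫ x, g x ∂μ) := by
  have hD : ∫ x, |f x - g x| ∂μ ≤ (∫ x, w x * f x ∂μ) + ∫ x, w x * g x ∂μ := by
    rw [← integral_add hwf hwg]
    exact integral_mono (hf.sub hg).abs (hwf.add hwg) hfg
  have hTf : 0 ≤ ∫ x, w x * f x ∂μ := integral_nonneg fun x => mul_nonneg (hw0 x) (hf0 x)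
  have hTg : 0 ≤ ∫ x, w x * g x ∂μ := integral_nonneg fun x => mul_nonneg (hw0 x) (hg0 x)
  rcases le_total (∫ x, g x ∂μ) (∫ x, f x ∂μ) with hle | hle
  · refine (integral_abs_div_integral_sub_le hf hg hg0 hZf hZg).trans ?_
    gcongr
    calc _ ≤ ((∫ x, w x * f x ∂μ) + ∫ x, w x * g x ∂μ) / ∫ x, f x ∂μ := by gcongr
      _ ≤ _ := by rw [add_div]; gcongr
  · have := integral_abs_div_integral_sub_le hg hf hf0 hZg hZf
    simp only [abs_sub_comm (g _), abs_sub_comm (g _ / _)] at this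
    refine this.trans ?_
    gcongr
    calc _ ≤ ((∫ x, w x * f x ∂μ) + ∫ x, w x * g x ∂μ) / ∫ x, g x ∂μ := by gcongr
      _ ≤ _ := by rw [add_div]; gcongr

end Normalize

lemma abs_exp_neg_sub_exp_neg_le (x y : ℝ) :
    |exp (-x) - exp (-y)| ≤ |x - y| * exp (-x) + |x - y| * exp (-y) := by
  wlog hxy : x ≤ y generalizing x y
  · simpa only [abs_sub_comm, add_comm] using this y x (le_of_not_ge hxy)
  have h1 : exp (-y) ≤ exp (-x) := exp_le_exp.2 (neg_le_neg hxy)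
  have h2 : exp (-x) * (1 - (y - x)) ≤ exp (-y) := by
    have := add_one_le_exp (-(y - x))
    calc exp (-x) * (1 - (y - x)) ≤ exp (-x) * exp (-(y - x)) := by gcongr; linarith
      _ = exp (-y) := by rw [← exp_add]; ring_nf
  rw [abs_of_nonneg (by linarith), abs_of_nonpos (by linarith)]
  nlinarith [exp_pos (-y), exp_pos (-x)]

lemma ConvexOn.exists_add_mul_le_of_eventually_ge {g : ℝ → ℝ} (hg : ConvexOn ℝ univ g)
    {η : ℝ} (hη : 0 < η) (hev : ∀ᶠ x in atTop, η * x ≤ g x) :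
    ∃ A, ∀ x y, A ≤ x → x ≤ y → g x + η / 2 * (y - x) ≤ g y := by
  obtain ⟨a, ha⟩ := eventually_atTop.1 hev
  refine ⟨a + 1 + 2 * |g a - η * a| / η, fun x y hx hxy => ?_⟩
  rcases hxy.eq_or_lt with rfl | hxy
  · simp
  have hax : a < x := by
    have : 0 ≤ 2 * |g a - η * a| / η := by positivity
    linarith
  have hsec : η / 2 * (y - a) ≤ g y - g a := by
    have hdev : 2 * |g a - η * a| / η ≤ y - a := by linarith
    rw [div_le_iff₀ hη] at hdev
    have := ha y (by linarith)
    have := le_abs_self (g a - η * a)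
    nlinarith
  have hcvx := hg.secant_mono_aux1 trivial trivial hax hxy
  have hya : 0 < y - a := by linarith
  refine le_of_mul_le_mul_left ?_ hya
  nlinarith [mul_le_mul_of_nonneg_left hsec (by linarith : (0 : ℝ) ≤ y - x)]

lemma InClassC.exists_tilt {V : ℝ → ℝ} (hV : InClassC V) :
    ∃ m ε A : ℝ, 0 < ε ∧ 0 ≤ A ∧
      (∀ x y, A ≤ x → x ≤ y → V x - m * x + ε * (y - x) ≤ V y - m * y) ∧
      ∀ x y, A ≤ x → x ≤ y → V (-x) + m * x + ε * (y - x) ≤ V (-y) + m * y := by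
  obtain ⟨vm, vp, hbot, htop, hlt⟩ := hV.slopes
  obtain ⟨p, hvp, hpq⟩ := EReal.exists_between_coe_real hlt
  obtain ⟨q, hpq, hqv⟩ := EReal.exists_between_coe_real hpq
  have hpq : p < q := EReal.coe_lt_coe_iff.1 hpq
  set m := (p + q) / 2
  set η := (q - p) / 2
  have hη : 0 < η := by simp only [η]; linarith
  have hright : ∀ᶠ x in atTop, η * x ≤ V x - m * x := by
    filter_upwards [htop.eventually (lt_mem_nhds hqv), eventually_gt_atTop 0] with x hx hx0
    have := (lt_div_iff₀ hx0).1 (EReal.coe_lt_coe_iff.1 hx)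
    simp only [η, m]
    nlinarith
  have hleft : ∀ᶠ x in atTop, η * x ≤ V (-x) + m * x := by
    filter_upwards [tendsto_neg_atTop_atBot.eventually (hbot.eventually (gt_mem_nhds hvp)),
      eventually_gt_atTop 0] with x hx hx0
    have := (div_lt_iff_of_neg (neg_lt_zero.2 hx0)).1 (EReal.coe_lt_coe_iff.1 hx)
    simp only [η, m]
    nlinarith
  have hconv₁ : ConvexOn ℝ univ fun x => V x - m * x :=
    hV.convex.sub (LinearMap.concaveOn (LinearMap.mul ℝ ℝ m) convex_univ)
  have hconv₂ : ConvexOn ℝ univ fun x => V (-x) + m * x :=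
    (hV.convex.comp_linearMap (-LinearMap.id)).add
      (LinearMap.convexOn (LinearMap.mul ℝ ℝ m) convex_univ)
  obtain ⟨A₁, hA₁⟩ := hconv₁.exists_add_mul_le_of_eventually_ge hη hright
  obtain ⟨A₂, hA₂⟩ := hconv₂.exists_add_mul_le_of_eventually_ge hη hleft
  refine ⟨m, η / 2, max (max A₁ A₂) 0, by positivity, le_max_right _ _,
    fun x y hx hxy => hA₁ x y ?_ hxy, fun x y hx hxy => hA₂ x y ?_ hxy⟩
  · exact le_trans (le_max_left _ _) ((le_max_left _ _).trans hx)
  · exact le_trans (le_max_right _ _) ((le_max_left _ _).trans hx)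

lemma ConvexOn.abs_sub_le_of_abs_le_rpow {V : ℝ → ℝ} (hV : ConvexOn ℝ univ V) {C K : ℝ}
    (hC : 0 ≤ C) (hK : 0 ≤ K) (hg : ∀ x, |V x| ≤ C * (1 + |x|) ^ K) {R x y : ℝ}
    (hx : |x| ≤ R) (hy : |y| ≤ R) :
    |V x - V y| ≤ 2 * C * (3 + R) ^ K * |x - y| := by
  have hR : 0 ≤ R := (abs_nonneg x).trans hx
  have hbound : ∀ a, dist a 0 < R + 2 → |V a| ≤ C * (3 + R) ^ K := fun a ha => by
    rw [dist_zero_right, Real.norm_eq_abs] at ha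
    exact (hg a).trans
      (mul_le_mul_of_nonneg_left (rpow_le_rpow (by positivity) (by linarith) hK) hC)
  have hL := (hV.subset (subset_univ _) (convex_ball 0 (R + 2))).lipschitzOnWith_of_abs_le
    one_pos hbound
  have hmem : ∀ z, |z| ≤ R → z ∈ Metric.ball (0 : ℝ) (R + 2 - 1) := fun z hz => by
    rw [mem_ball_zero_iff, Real.norm_eq_abs]; linarith
  have := hL.dist_le_mul x (hmem x hx) y (hmem y hy)
  rwa [Real.dist_eq, Real.dist_eq, div_one, Real.coe_toNNReal _ (by positivity), ← mul_assoc]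
    at this

def resamplingEnergy (V : ℝ → ℝ) (b c u : ℝ) : ℝ := V (u - b) + V (c - u)

lemma abs_resamplingEnergy_sub_le {V : ℝ → ℝ} (hV : ConvexOn ℝ univ V) {C K : ℝ}
    (hC : 0 ≤ C) (hK : 0 ≤ K) (hg : ∀ x, |V x| ≤ C * (1 + |x|) ^ K) {b b' c c' : ℝ}
    (hb : |b' - b| ≤ 2) (hc : |c' - c| ≤ 2) (u : ℝ) :
    |resamplingEnergy V b c u - resamplingEnergy V b' c' u| ≤
      2 * C * (5 + |u - b| + |c - u|) ^ K * (|b' - b| + |c' - c|) := by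
  set R := 2 + |u - b| + |c - u|
  have hub' : |u - b'| ≤ R := by
    have := abs_sub_le u b b'
    rw [abs_sub_comm b b'] at this
    linarith [abs_nonneg (c - u)]
  have hcu' : |c' - u| ≤ R := by
    have := abs_sub_le c' c u
    linarith [abs_nonneg (u - b)]
  have h₁ := hV.abs_sub_le_of_abs_le_rpow hC hK hg (R := R) (x := u - b) (y := u - b')
    (by linarith [abs_nonneg (c - u)]) hub'
  have h₂ := hV.abs_sub_le_of_abs_le_rpow hC hK hg (R := R) (x := c - u) (y := c' - u)
    (by linarith [abs_nonneg (u - b)]) hcu'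
  rw [show u - b - (u - b') = b' - b by ring] at h₁
  rw [show c - u - (c' - u) = -(c' - c) by ring, abs_neg] at h₂
  rw [show (5 : ℝ) + |u - b| + |c - u| = 3 + R by ring, resamplingEnergy, resamplingEnergy]
  calc _ = |(V (u - b) - V (u - b')) + (V (c - u) - V (c' - u))| := by ring_nf
    _ ≤ _ := (abs_add_le _ _).trans (by linarith)

lemma InClassC.continuous_s13 {V : ℝ → ℝ} (hV : InClassC V) : Continuous V :=
  continuousOn_univ.1 (hV.convex.continuousOn isOpen_univ)

lemma InClassC.continuous_resamplingEnergy {V : ℝ → ℝ} (hV : InClassC V) (b c : ℝ) :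
    Continuous (resamplingEnergy V b c) :=
  (hV.continuous_s13.comp (continuous_sub_right b)).add
    (hV.continuous_s13.comp (continuous_sub_left c))

lemma InClassC.exists_resamplingEnergy_growth {V : ℝ → ℝ} (hV : InClassC V) :
    ∃ ε A : ℝ, 0 < ε ∧ 0 ≤ A ∧ ∀ b c : ℝ,
      (∀ u v, max b c + A ≤ u → u ≤ v →
        resamplingEnergy V b c u + ε * (v - u) ≤ resamplingEnergy V b c v) ∧
      ∀ u v, u ≤ v → v ≤ min b c - A →
        resamplingEnergy V b c v + ε * (v - u) ≤ resamplingEnergy V b c u := by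
  obtain ⟨m, ε, A, hε, hA, hright, hleft⟩ := hV.exists_tilt
  refine ⟨2 * ε, A, by positivity, hA, fun b c =>
    ⟨fun u v hu huv => ?_, fun u v huv hv => ?_⟩⟩
  · have h₁ := hright (u - b) (v - b) (by linarith [le_max_left b c]) (by linarith)
    have h₂ := hleft (u - c) (v - c) (by linarith [le_max_right b c]) (by linarith)
    simp only [neg_sub] at h₂
    unfold resamplingEnergy
    linarith
  · have h₁ := hright (c - v) (c - u) (by linarith [min_le_right b c]) (by linarith)
    have h₂ := hleft (b - v) (b - u) (by linarith [min_le_left b c]) (by linarith)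
    simp only [neg_sub] at h₂
    unfold resamplingEnergy
    linarith

lemma InClassC.integrable_exp_neg_resamplingEnergy {V : ℝ → ℝ} (hV : InClassC V) (b c : ℝ) :
    Integrable fun u => exp (-resamplingEnergy V b c u) := by
  obtain ⟨ε, A, hε, -, hgrow⟩ := hV.exists_resamplingEnergy_growth
  exact integrable_exp_neg_of_growth (hV.continuous_resamplingEnergy b c) hε (hgrow b c).1
    (hgrow b c).2

lemma abs_sub_add_abs_sub_le {A : ℝ} (hA : 0 ≤ A) (b c u : ℝ) :
    |u - b| + |c - u| ≤
      |c - b| + 2 * A + 2 * max (u - (max b c + A)) 0 + 2 * max (min b c - A - u) 0 := by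
  have := le_max_left (u - (max b c + A)) 0
  have := le_max_right (u - (max b c + A)) 0
  have := le_max_left (min b c - A - u) 0
  have := le_max_right (min b c - A - u) 0
  rcases le_total b c with h | h
  · rw [max_eq_right h, min_eq_left h] at *
    rw [abs_of_nonneg (sub_nonneg.2 h)]
    rcases abs_cases (u - b) with ⟨h₁, -⟩ | ⟨h₁, -⟩ <;>
      rcases abs_cases (c - u) with ⟨h₂, -⟩ | ⟨h₂, -⟩ <;> linarith
  · rw [max_eq_left h, min_eq_right h] at *
    rw [abs_of_nonpos (sub_nonpos.2 h)]
    rcases abs_cases (u - b) with ⟨h₁, -⟩ | ⟨h₁, -⟩ <;>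
      rcases abs_cases (c - u) with ⟨h₂, -⟩ | ⟨h₂, -⟩ <;> linarith

lemma five_add_abs_rpow_le {A K : ℝ} (hA : 0 ≤ A) (hK : 0 ≤ K) (b c u : ℝ) :
    (5 + |u - b| + |c - u|) ^ K ≤ ((5 + 2 * A) * (1 + |c - b|)) ^ K *
      ((1 + max (u - (max b c + A)) 0) ^ K + (1 + max (min b c - A - u) 0) ^ K) := by
  set x := max (u - (max b c + A)) 0
  set y := max (min b c - A - u) 0
  have hx : 0 ≤ x := le_max_right _ _
  have hy : 0 ≤ y := le_max_right _ _
  have hxy : x = 0 ∨ y = 0 := by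
    rcases le_total u (max b c + A) with h | h
    · exact .inl (max_eq_right (by linarith))
    · exact .inr (max_eq_right (by linarith [min_le_max (a := b) (b := c)]))
  have hbase : 5 + |u - b| + |c - u| ≤ ((5 + 2 * A) * (1 + |c - b|)) * (1 + x + y) := by
    have := abs_sub_add_abs_sub_le hA b c u
    have := abs_nonneg (c - b)
    nlinarith [mul_nonneg (mul_nonneg hA this) (add_nonneg hx hy)]
  calc (5 + |u - b| + |c - u|) ^ K ≤ (((5 + 2 * A) * (1 + |c - b|)) * (1 + x + y)) ^ K :=
        rpow_le_rpow (by positivity) hbase hK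
    _ = ((5 + 2 * A) * (1 + |c - b|)) ^ K * (1 + x + y) ^ K :=
        mul_rpow (by positivity) (by positivity)
    _ ≤ _ := by
        gcongr
        rcases hxy with h | h <;> simp only [h, add_zero, one_rpow] <;>
          linarith [one_le_rpow (le_add_of_nonneg_right hx) hK,
            one_le_rpow (le_add_of_nonneg_right hy) hK]

lemma InClassC.exists_moment_bound {V : ℝ → ℝ} (hV : InClassC V) {K : ℝ} (hK : 0 ≤ K) :
    ∃ M, 0 ≤ M ∧ ∀ b c : ℝ,
      Integrable (fun u => (5 + |u - b| + |c - u|) ^ K * exp (-resamplingEnergy V b c u)) ∧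
      ∫ u, (5 + |u - b| + |c - u|) ^ K * exp (-resamplingEnergy V b c u) ≤
        M * (1 + |c - b|) ^ K * ∫ u, exp (-resamplingEnergy V b c u) := by
  obtain ⟨ε, A, hε, hA, hgrow⟩ := hV.exists_resamplingEnergy_growth
  refine ⟨(5 + 2 * A) ^ K * (2 * tailMoment K ε),
    mul_nonneg (by positivity) (mul_nonneg zero_le_two tailMoment_nonneg), fun b c => ?_⟩
  have hcont := hV.continuous_resamplingEnergy b c
  have hint := hV.integrable_exp_neg_resamplingEnergy b c
  obtain ⟨hR, hR_le⟩ :=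
    integrable_and_integral_le_of_growth_right hcont hε hK (hgrow b c).1 hint
  obtain ⟨hL, hL_le⟩ :=
    integrable_and_integral_le_of_growth_left hcont hε hK (hgrow b c).2 hint
  set W := ((5 + 2 * A) * (1 + |c - b|)) ^ K
  have hdom := (hR.add hL).const_mul W
  have hpt : ∀ u, (5 + |u - b| + |c - u|) ^ K * exp (-resamplingEnergy V b c u) ≤
      W * ((1 + max (u - (max b c + A)) 0) ^ K * exp (-resamplingEnergy V b c u) +
        (1 + max (min b c - A - u) 0) ^ K * exp (-resamplingEnergy V b c u)) := fun u => by
    rw [← add_mul, ← mul_assoc]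
    exact mul_le_mul_of_nonneg_right (five_add_abs_rpow_le hA hK b c u) (exp_pos _).le
  have hcont_w : Continuous fun u => (5 + |u - b| + |c - u|) ^ K *
      exp (-resamplingEnergy V b c u) :=
    (by fun_prop : Continuous fun u : ℝ => 5 + |u - b| + |c - u|).rpow_const
      (fun _ => Or.inr hK) |>.mul hcont.neg.rexp
  have hint_w := hdom.mono' hcont_w.aestronglyMeasurable (.of_forall fun u => by
    rw [Real.norm_of_nonneg (by positivity)]; exact hpt u)
  refine ⟨hint_w, (integral_mono hint_w hdom hpt).trans ?_⟩
  rw [integral_const_mul, integral_add' hR hL]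
  have hW : 0 ≤ W := by positivity
  calc _ ≤ W * (tailMoment K ε * (∫ u, exp (-resamplingEnergy V b c u)) +
        tailMoment K ε * ∫ u, exp (-resamplingEnergy V b c u)) := by gcongr
    _ = _ := by simp only [W]; rw [mul_rpow (by positivity) (by positivity)]; ring

lemma InClassC.exists_moment_bound_of_near {V : ℝ → ℝ} (hV : InClassC V) {K : ℝ}
    (hK : 0 ≤ K) :
    ∃ M, 0 ≤ M ∧ ∀ b b' c c' : ℝ, |b' - b| ≤ 2 → |c' - c| ≤ 2 →
      Integrable (fun u => (5 + |u - b| + |c - u|) ^ K * exp (-resamplingEnergy V b' c' u)) ∧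
      ∫ u, (5 + |u - b| + |c - u|) ^ K * exp (-resamplingEnergy V b' c' u) ≤
        M * (1 + |c - b|) ^ K * ∫ u, exp (-resamplingEnergy V b' c' u) := by
  obtain ⟨M, hM0, hM⟩ := hV.exists_moment_bound hK
  refine ⟨10 ^ K * M, by positivity, fun b b' c c' hb hc => ?_⟩
  obtain ⟨hint, hle⟩ := hM b' c'
  have hshift : ∀ u, 5 + |u - b| + |c - u| ≤ 2 * (5 + |u - b'| + |c' - u|) := fun u => by
    have h₁ := abs_sub_le u b' b
    have h₂ := abs_sub_le c c' u
    rw [abs_sub_comm c c'] at h₂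
    linarith [abs_nonneg (u - b'), abs_nonneg (c' - u)]
  have hpt : ∀ u, (5 + |u - b| + |c - u|) ^ K * exp (-resamplingEnergy V b' c' u) ≤
      2 ^ K * ((5 + |u - b'| + |c' - u|) ^ K * exp (-resamplingEnergy V b' c' u)) := fun u => by
    rw [← mul_assoc, ← mul_rpow zero_le_two (by positivity)]
    gcongr
    exact hshift u
  have hcont_w : Continuous fun u => (5 + |u - b| + |c - u|) ^ K *
      exp (-resamplingEnergy V b' c' u) :=
    (by fun_prop : Continuous fun u : ℝ => 5 + |u - b| + |c - u|).rpow_const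
      (fun _ => Or.inr hK) |>.mul (hV.continuous_resamplingEnergy b' c').neg.rexp
  have hint_w := (hint.const_mul (2 ^ K)).mono' hcont_w.aestronglyMeasurable
    (.of_forall fun u => by rw [Real.norm_of_nonneg (by positivity)]; exact hpt u)
  refine ⟨hint_w, (integral_mono hint_w (hint.const_mul _) hpt).trans ?_⟩
  have hcb : (1 + |c' - b'|) ^ K ≤ 5 ^ K * (1 + |c - b|) ^ K := by
    rw [← mul_rpow (by norm_num) (by positivity)]
    gcongr
    have := abs_sub_le c' c b'
    have := abs_sub_le c b b'
    rw [abs_sub_comm b b'] at this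
    linarith [abs_nonneg (c - b)]
  have hZ : 0 ≤ ∫ u, exp (-resamplingEnergy V b' c' u) :=
    integral_nonneg fun u => (exp_pos _).le
  rw [integral_const_mul]
  calc 2 ^ K * ∫ u, (5 + |u - b'| + |c' - u|) ^ K * exp (-resamplingEnergy V b' c' u)
      ≤ 2 ^ K * (M * (5 ^ K * (1 + |c - b|) ^ K) * ∫ u, exp (-resamplingEnergy V b' c' u)) := by
        gcongr
        exact hle.trans (by gcongr)
    _ = (2 * 5) ^ K * M * (1 + |c - b|) ^ K * ∫ u, exp (-resamplingEnergy V b' c' u) := by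
        rw [mul_rpow (by norm_num) (by norm_num)]; ring
    _ = _ := by norm_num

lemma InClassC.integral_pos_exp_neg_resamplingEnergy {V : ℝ → ℝ} (hV : InClassC V)
    (b c : ℝ) :
    0 < ∫ u, exp (-resamplingEnergy V b c u) :=
  integral_exp_pos (hV.integrable_exp_neg_resamplingEnergy b c)

lemma InClassC.integral_abs_rho_sub_le_two {V : ℝ → ℝ} (hV : InClassC V) (b b' c c' : ℝ) :
    ∫ u, |rho V b c u - rho V b' c' u| ≤ 2 :=
  integral_abs_div_integral_sub_le_two (hV.integrable_exp_neg_resamplingEnergy b c)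
    (hV.integrable_exp_neg_resamplingEnergy b' c') (fun _ => (exp_pos _).le)
    (fun _ => (exp_pos _).le) (hV.integral_pos_exp_neg_resamplingEnergy b c)
    (hV.integral_pos_exp_neg_resamplingEnergy b' c')

lemma InClassC.exists_integral_abs_rho_sub_le_of_near {V : ℝ → ℝ} (hV : InClassC V)
    {C₀ K : ℝ} (hC₀ : 0 ≤ C₀) (hK : 0 ≤ K)
    (hg : ∀ x, |V x| ≤ C₀ * (1 + |x|) ^ K) :
    ∃ C, 0 ≤ C ∧ ∀ b b' c c' : ℝ, |b' - b| ≤ 2 → |c' - c| ≤ 2 →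
      ∫ u, |rho V b c u - rho V b' c' u| ≤ C * (|b' - b| + |c' - c|) * (1 + |c - b|) ^ K := by
  obtain ⟨M, hM0, hM⟩ := hV.exists_moment_bound_of_near hK
  refine ⟨8 * C₀ * M, by positivity, fun b b' c c' hb hc => ?_⟩
  obtain ⟨hPf, hPf_le⟩ := hM b b c c (by simp) (by simp)
  obtain ⟨hPg, hPg_le⟩ := hM b b' c c' hb hc
  set S := |b' - b| + |c' - c|
  set P := fun u => (5 + |u - b| + |c - u|) ^ K
  have hw : ∀ u, |exp (-resamplingEnergy V b c u) - exp (-resamplingEnergy V b' c' u)| ≤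
      2 * C₀ * S * P u * exp (-resamplingEnergy V b c u) +
        2 * C₀ * S * P u * exp (-resamplingEnergy V b' c' u) := fun u => by
    have := abs_resamplingEnergy_sub_le hV.convex hC₀ hK hg hb hc u
    refine (abs_exp_neg_sub_exp_neg_le _ _).trans ?_
    gcongr <;> linarith
  have hZf := hV.integral_pos_exp_neg_resamplingEnergy b c
  have hZg := hV.integral_pos_exp_neg_resamplingEnergy b' c'
  have hTV := integral_abs_div_integral_sub_le_of_abs_sub_le
    (hV.integrable_exp_neg_resamplingEnergy b c) (hV.integrable_exp_neg_resamplingEnergy b' c')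
    (fun _ => (exp_pos _).le) (fun _ => (exp_pos _).le) hZf hZg
    (fun u => by positivity) (by simpa only [mul_assoc] using hPf.const_mul (2 * C₀ * S))
    (by simpa only [mul_assoc] using hPg.const_mul (2 * C₀ * S)) hw
  simp only [mul_assoc, integral_const_mul] at hTV
  have hf_le := (div_le_iff₀ hZf).2 hPf_le
  have hg_le := (div_le_iff₀ hZg).2 hPg_le
  refine hTV.trans ?_
  calc _ = 4 * C₀ * S *
        ((∫ u, P u * exp (-resamplingEnergy V b c u)) / (∫ u, exp (-resamplingEnergy V b c u)) +
          (∫ u, P u * exp (-resamplingEnergy V b' c' u)) /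
            ∫ u, exp (-resamplingEnergy V b' c' u)) := by ring
    _ ≤ 4 * C₀ * S * (M * (1 + |c - b|) ^ K + M * (1 + |c - b|) ^ K) := by gcongr
    _ = _ := by ring

lemma one_add_rpow_le_two_rpow_mul_max {x K : ℝ} (hx : 0 ≤ x) (hK : 0 ≤ K) :
    (1 + x) ^ K ≤ 2 ^ K * max 1 (x ^ K) := by
  rcases le_total x 1 with h | h
  · calc (1 + x) ^ K ≤ 2 ^ K := rpow_le_rpow (by positivity) (by linarith) hK
      _ ≤ 2 ^ K * max 1 (x ^ K) := le_mul_of_one_le_right (by positivity) (le_max_left _ _)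
  · calc (1 + x) ^ K ≤ (2 * x) ^ K := rpow_le_rpow (by positivity) (by linarith) hK
      _ = 2 ^ K * x ^ K := mul_rpow zero_le_two hx
      _ ≤ 2 ^ K * max 1 (x ^ K) := by gcongr; exact le_max_right _ _

/-- **Total variation continuity of the resampling density.** For `V ∈ 𝒞` with growth exponent
`K` there is `C > 0` such that for all `b, b', c, c'`, writing `Δ = (|b'-b|+|c'-c|)/2`,
`(1/2)∫ |ρ_{b,c} - ρ_{b',c'}| ≤ C Δ max(1, |c-b|^K)`. -/
theorem resampling_density_tv_continuity (V : ℝ → ℝ) (hV : InClassC V)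
    (K : ℝ) (hK : 1 ≤ K) (hgrowth : ∃ C > (0 : ℝ), ∀ x : ℝ, |V x| ≤ C * (1 + |x|) ^ K) :
    ∃ C > (0 : ℝ), ∀ b b' c c' : ℝ,
      (1 / 2) * (∫ u : ℝ, |rho V b c u - rho V b' c' u|) ≤
        C * ((|b' - b| + |c' - c|) / 2) * max 1 (|c - b| ^ K) := by
  obtain ⟨C₀, hC₀, hg⟩ := hgrowth
  have hK₀ : 0 ≤ K := by linarith
  obtain ⟨C, hC, hnear⟩ := hV.exists_integral_abs_rho_sub_le_of_near hC₀.le hK₀ hg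
  refine ⟨max 1 (2 ^ K * C), by positivity, fun b b' c c' => ?_⟩
  have hmax : 1 ≤ max 1 (|c - b| ^ K) := le_max_left _ _
  rcases le_or_gt ((|b' - b| + |c' - c|) / 2) 1 with hΔ | hΔ
  · have hb : |b' - b| ≤ 2 := by linarith [abs_nonneg (c' - c)]
    have hc : |c' - c| ≤ 2 := by linarith [abs_nonneg (b' - b)]
    calc 1 / 2 * ∫ u, |rho V b c u - rho V b' c' u|
        ≤ 1 / 2 * (C * (|b' - b| + |c' - c|) * (1 + |c - b|) ^ K) := by
          gcongr; exact hnear b b' c c' hb hc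
      _ ≤ 1 / 2 * (C * (|b' - b| + |c' - c|) * (2 ^ K * max 1 (|c - b| ^ K))) := by
          gcongr; exact one_add_rpow_le_two_rpow_mul_max (abs_nonneg _) hK₀
      _ = 2 ^ K * C * ((|b' - b| + |c' - c|) / 2) * max 1 (|c - b| ^ K) := by ring
      _ ≤ _ := by gcongr; exact le_max_right _ _
  · calc 1 / 2 * ∫ u, |rho V b c u - rho V b' c' u| ≤ 1 / 2 * 2 := by
          gcongr; exact hV.integral_abs_rho_sub_le_two b b' c c'
      _ = 1 * 1 * 1 := by norm_num
      _ ≤ _ := by gcongr; exact le_max_left _ _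

end
end
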